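/- arXiv:1501.06955 — 6 statements merged into one kernel-verified Lean document; each statement's English description precedes it below -/
import Mathlib

section
/- Let n ≥ 3. An invertible ℂ-linear map T : ℂⁿ → ℂⁿ satisfies H(Tx) = H(x) for all x ∈ ℂⁿ if and only if T is the composition of a coordinate permutation and an even sign-change map. Consequently the group Λ of linear automorphisms of ℂⁿ preserving H is the semidirect product Υₙ ⋊ Sₙ; in particular Λ is finite. -/
open scoped BigOperators

noncomputable section

/-- The Markoff–Hurwitz polynomial `H(x) = x₁² + ⋯ + xₙ² − x₁⋯xₙ`. -/
def MH (n : ℕ) (x : Fin n → ℂ) : ℂ := (∑ i, x i ^ 2) - ∏ i, x i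

/-- The group `Λ` of invertible `ℂ`-linear maps of `ℂⁿ` preserving `H`. -/
def LinLambda (n : ℕ) : Subgroup ((Fin n → ℂ) ≃ₗ[ℂ] (Fin n → ℂ)) where
  carrier := {T | ∀ x, MH n (T x) = MH n x}
  one_mem' := by intro x; rfl
  mul_mem' := by
    intro T S hT hS x
    have : (T * S) x = T (S x) := rfl
    rw [this, hT, hS]
  inv_mem' := by
    intro T hT x
    have h1 : T (T⁻¹ x) = x := by
      have : (T * T⁻¹) x = x := by rw [mul_inv_cancel]; rfl
      exact this
    calc MH n (T⁻¹ x) = MH n (T (T⁻¹ x)) := (hT _).symm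
    _ = MH n x := by rw [h1]

/-- An even sign-change map of `ℂⁿ` as a linear automorphism. -/
def IsEvenSignChangeL (n : ℕ) (T : (Fin n → ℂ) ≃ₗ[ℂ] (Fin n → ℂ)) : Prop :=
  ∃ ε : Fin n → ℂ, (∀ i, ε i = 1 ∨ ε i = -1) ∧ (∏ i, ε i) = 1 ∧
    ∀ (x : Fin n → ℂ) (i : Fin n), T x i = ε i * x i

/-- A coordinate permutation of `ℂⁿ` as a linear automorphism. -/
def IsCoordPermL (n : ℕ) (T : (Fin n → ℂ) ≃ₗ[ℂ] (Fin n → ℂ)) : Prop :=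
  ∃ σ : Equiv.Perm (Fin n), ∀ (x : Fin n → ℂ) (i : Fin n), T x i = x (σ i)

/-- The group `Υₙ` of even sign-change automorphisms. -/
def UpsilonSub (n : ℕ) : Subgroup ((Fin n → ℂ) ≃ₗ[ℂ] (Fin n → ℂ)) :=
  Subgroup.closure {T | IsEvenSignChangeL n T}

/-- The group `Sₙ` of coordinate-permutation automorphisms. -/
def PermSub (n : ℕ) : Subgroup ((Fin n → ℂ) ≃ₗ[ℂ] (Fin n → ℂ)) :=
  Subgroup.closure {T | IsCoordPermL n T}

/-!
Comparing `H` at `x` and at `2x` shows that a linear map preserving `H` preserves separately its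
homogeneous parts `∑ xᵢ²` and `∏ xᵢ`, since `n ≠ 2`. If `T` preserves `∏ xᵢ`, the hyperplane
`(T x)ᵢ = 0` lies in the union of the coordinate hyperplanes; a vector space over an infinite
field is not a finite union of proper subspaces, so it is one of them and `(T x)ᵢ = εᵢ x_{σ i}`.
Invertibility makes `σ` a permutation, `∑ xᵢ²` forces `εᵢ = ±1` and `∏ xᵢ` forces `∏ εᵢ = 1`.
-/

open Finset

section ProductPreserving

variable {K ι : Type*} [Field K] [Fintype ι] [DecidableEq ι]

theorem exists_apply_eq_mul_apply_of_prod_eq [Infinite K] (T : (ι → K) →ₗ[K] (ι → K))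
    (hT : ∀ x, ∏ i, T x i = ∏ i, x i) (i : ι) : ∃ j c, ∀ x, T x i = c * x j := by
  obtain ⟨j, hj⟩ : ∃ j, ∀ x, T x i = 0 → x j = 0 := by
    by_contra! h
    obtain ⟨x, hxi, hx⟩ := Module.Dual.exists_forall_mem_ne_zero_of_forall_exists
      (LinearMap.ker ((LinearMap.proj i).comp T)) (fun j => LinearMap.proj j) (by simpa using h)
    have hprod : ∏ j, x j ≠ 0 := prod_ne_zero_iff.mpr fun j _ => hx j
    exact hprod (by rw [← hT, prod_eq_zero (mem_univ i) (by simpa using hxi)])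
  have hy : T (Pi.single j 1) i ≠ 0 := fun h => by simpa using hj _ h
  refine ⟨j, T (Pi.single j 1) i, fun x => ?_⟩
  have hx := hj (x - (T x i / T (Pi.single j 1) i) • Pi.single j 1) (by simp [hy])
  rw [Pi.sub_apply, Pi.smul_apply, Pi.single_eq_same, smul_eq_mul, mul_one, sub_eq_zero,
    eq_div_iff hy] at hx
  linear_combination -hx

theorem exists_perm_apply_eq_mul_of_prod_eq [Infinite K] (T : (ι → K) ≃ₗ[K] (ι → K))
    (hT : ∀ x, ∏ i, T x i = ∏ i, x i) :
    ∃ (σ : Equiv.Perm ι) (ε : ι → K), ∏ i, ε i = 1 ∧ ∀ x i, T x i = ε i * x (σ i) := by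
  choose σ ε hσε using exists_apply_eq_mul_apply_of_prod_eq T.toLinearMap hT
  replace hσε : ∀ x i, T x i = ε i * x (σ i) := fun x i => hσε i x
  have hε : ∏ i, ε i = 1 := by simpa [hσε] using hT 1
  have hε0 : ∀ i, ε i ≠ 0 := fun i => prod_ne_zero_iff.mp (hε ▸ one_ne_zero) i (mem_univ i)
  have hσ : σ.Injective := by
    intro i₁ i₂ h
    by_contra hne
    set y := T.symm (Pi.single i₁ 1)
    have h₁ : ε i₁ * y (σ i₁) = 1 := by simp [y, ← hσε]
    have h₂ : ε i₂ * y (σ i₁) = 0 := by simp [y, h, ← hσε, Pi.single_eq_of_ne' hne]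
    simp_all
  exact ⟨Equiv.ofBijective σ hσ.bijective_of_finite, ε, hε, hσε⟩

theorem eq_one_or_eq_neg_one_of_sum_sq_eq (σ : Equiv.Perm ι) (ε : ι → K)
    (h : ∀ x : ι → K, ∑ i, (ε i * x (σ i)) ^ 2 = ∑ i, x i ^ 2) (i : ι) :
    ε i = 1 ∨ ε i = -1 := by
  have := h (Pi.single (σ i) 1)
  rw [sum_eq_single i] at this
  · simpa [Pi.single_apply, ite_pow] using this
  · intro j _ hj
    simp [Pi.single_eq_of_ne (σ.injective.ne hj)]
  · simp

end ProductPreserving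

section MarkoffHurwitz

variable {n : ℕ}

theorem MH_smul (c : ℂ) (x : Fin n → ℂ) :
    MH n (c • x) = c ^ 2 * ∑ i, x i ^ 2 - c ^ n * ∏ i, x i := by
  simp [MH, mul_pow, mul_sum, prod_mul_distrib]

theorem MH_signed_perm (σ : Equiv.Perm (Fin n)) (ε : Fin n → ℂ) (hε : ∀ i, ε i = 1 ∨ ε i = -1)
    (hprod : ∏ i, ε i = 1) (x : Fin n → ℂ) : MH n (fun i => ε i * x (σ i)) = MH n x := by
  have hε2 : ∀ i, ε i ^ 2 = 1 := fun i => sq_eq_one_iff.mpr (hε i)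
  simp only [MH, mul_pow, hε2, one_mul, prod_mul_distrib, hprod]
  rw [Equiv.sum_comp σ fun i => x i ^ 2, Equiv.prod_comp σ x]

theorem prod_eq_and_sum_sq_eq_of_MH_eq (hn : 3 ≤ n) (T : (Fin n → ℂ) →ₗ[ℂ] (Fin n → ℂ))
    (hT : ∀ x, MH n (T x) = MH n x) (x : Fin n → ℂ) :
    ∏ i, T x i = ∏ i, x i ∧ ∑ i, T x i ^ 2 = ∑ i, x i ^ 2 := by
  have h2n : (2 : ℂ) ^ n - 4 ≠ 0 := by
    rw [sub_ne_zero]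
    norm_cast
    have := Nat.pow_le_pow_right two_pos hn
    omega
  have h1 := hT x
  have h2 := hT ((2 : ℂ) • x)
  rw [map_smul, MH_smul, MH_smul] at h2
  simp only [MH] at h1
  have hprod : ∏ i, T x i = ∏ i, x i := by
    have : ((2 : ℂ) ^ n - 4) * (∏ i, T x i - ∏ i, x i) = 0 := by
      linear_combination 4 * h1 - h2
    linear_combination (mul_eq_zero.mp this).resolve_left h2n
  exact ⟨hprod, by linear_combination h1 + hprod⟩

theorem preserves_MH_iff (hn : 3 ≤ n) (T : (Fin n → ℂ) ≃ₗ[ℂ] (Fin n → ℂ)) :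
    (∀ x, MH n (T x) = MH n x) ↔
      ∃ (σ : Equiv.Perm (Fin n)) (ε : Fin n → ℂ), (∀ i, ε i = 1 ∨ ε i = -1) ∧
        ∏ i, ε i = 1 ∧ ∀ x i, T x i = ε i * x (σ i) := by
  constructor
  · intro hT
    have hpq := prod_eq_and_sum_sq_eq_of_MH_eq hn T hT
    obtain ⟨σ, ε, hprod, hσε⟩ := exists_perm_apply_eq_mul_of_prod_eq T fun x => (hpq x).1
    refine ⟨σ, ε, eq_one_or_eq_neg_one_of_sum_sq_eq σ ε fun x => ?_, hprod, hσε⟩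
    simpa only [LinearEquiv.coe_coe, hσε] using (hpq x).2
  · rintro ⟨σ, ε, hε, hprod, hσε⟩ x
    rw [show T x = fun i => ε i * x (σ i) from funext (hσε x), MH_signed_perm σ ε hε hprod]

end MarkoffHurwitz

theorem LinearEquiv.inv_apply_perm_eq_mul {R ι : Type*} [CommRing R]
    (T : (ι → R) ≃ₗ[R] (ι → R)) (σ : ι → ι) (ε : ι → R) (hε : ∀ i, ε i * ε i = 1)
    (hT : ∀ x i, T x i = ε i * x (σ i)) (x : ι → R) (i : ι) : T⁻¹ x (σ i) = ε i * x i := by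
  have h := hT (T⁻¹ x) i
  rw [LinearEquiv.coe_inv] at h ⊢
  rw [T.apply_symm_apply] at h
  rw [h, ← mul_assoc, hε, one_mul]

section Subgroups

variable {n : ℕ}

def evenSignChanges (n : ℕ) : Subgroup ((Fin n → ℂ) ≃ₗ[ℂ] (Fin n → ℂ)) where
  carrier := {T | IsEvenSignChangeL n T}
  one_mem' := ⟨1, fun _ => Or.inl rfl, prod_const_one, fun _ _ => (one_mul _).symm⟩
  mul_mem' := by
    rintro S T ⟨ε, hε, hεp, hS⟩ ⟨δ, hδ, hδp, hT⟩
    refine ⟨ε * δ, fun i => ?_, by simp [prod_mul_distrib, hεp, hδp], fun x i => ?_⟩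
    · rcases hε i with h | h <;> rcases hδ i with h' | h' <;> simp [h, h']
    · rw [LinearEquiv.mul_apply, hS, hT, Pi.mul_apply, mul_assoc]
  inv_mem' := by
    rintro T ⟨ε, hε, hεp, hT⟩
    refine ⟨ε, hε, hεp, T.inv_apply_perm_eq_mul id ε (fun i => mul_self_eq_one_iff.mpr (hε i)) hT⟩

def coordPerms (n : ℕ) : Subgroup ((Fin n → ℂ) ≃ₗ[ℂ] (Fin n → ℂ)) where
  carrier := {T | IsCoordPermL n T}
  one_mem' := ⟨1, fun _ _ => rfl⟩
  mul_mem' := by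
    rintro S T ⟨σ, hS⟩ ⟨τ, hT⟩
    exact ⟨τ * σ, fun x i => by rw [LinearEquiv.mul_apply, hS, hT, Equiv.Perm.mul_apply]⟩
  inv_mem' := by
    rintro T ⟨σ, hT⟩
    refine ⟨σ⁻¹, fun x i => ?_⟩
    simpa using T.inv_apply_perm_eq_mul σ 1 (fun _ => one_mul 1) (by simpa using hT) x (σ⁻¹ i)

theorem UpsilonSub_eq : UpsilonSub n = evenSignChanges n :=
  Subgroup.closure_eq (evenSignChanges n)

theorem PermSub_eq : PermSub n = coordPerms n :=
  Subgroup.closure_eq (coordPerms n)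

theorem UpsilonSub_le_LinLambda : UpsilonSub n ≤ LinLambda n := by
  rw [UpsilonSub_eq]
  rintro T ⟨ε, hε, hprod, hT⟩ x
  rw [show T x = _ from funext (hT x)]
  exact MH_signed_perm 1 ε hε hprod x

theorem PermSub_le_LinLambda : PermSub n ≤ LinLambda n := by
  rw [PermSub_eq]
  rintro T ⟨σ, hT⟩ x
  rw [show T x = _ from funext (hT x)]
  simpa using MH_signed_perm σ 1 (fun _ => Or.inl rfl) prod_const_one x

theorem UpsilonSub_subgroupOf_normal (hn : 3 ≤ n) :
    ((UpsilonSub n).subgroupOf (LinLambda n)).Normal := by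
  constructor
  intro g hg h
  rw [Subgroup.mem_subgroupOf, UpsilonSub_eq] at hg ⊢
  obtain ⟨δ, hδ, hδp, hg⟩ := hg
  obtain ⟨σ, ε, hε, -, hh⟩ := (preserves_MH_iff hn h).mp h.2
  have hε2 : ∀ i, ε i * ε i = 1 := fun i => mul_self_eq_one_iff.mpr (hε i)
  refine ⟨δ ∘ σ, fun i => hδ (σ i), by rw [← hδp]; exact Equiv.prod_comp σ δ, fun x i => ?_⟩
  simp only [Subgroup.coe_mul, Subgroup.coe_inv, LinearEquiv.mul_apply, hh, hg,
    LinearEquiv.inv_apply_perm_eq_mul _ σ ε hε2 hh, Function.comp_apply]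
  linear_combination (δ (σ i) * x i) * hε2 i

theorem UpsilonSub_sup_PermSub (hn : 3 ≤ n) : UpsilonSub n ⊔ PermSub n = LinLambda n := by
  refine le_antisymm (sup_le UpsilonSub_le_LinLambda PermSub_le_LinLambda) fun T hT => ?_
  obtain ⟨σ, ε, hε, hprod, hTσ⟩ := (preserves_MH_iff hn T).mp hT
  set P := LinearEquiv.funCongrLeft ℂ ℂ σ
  have hP : ∀ x i, P x i = x (σ i) := fun _ _ => rfl
  rw [← inv_mul_cancel_right T P]
  refine Subgroup.mul_mem_sup ?_ (Subgroup.subset_closure ⟨σ, hP⟩)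
  rw [UpsilonSub_eq]
  refine ⟨ε, hε, hprod, fun x i => ?_⟩
  have hPinv := P.inv_apply_perm_eq_mul σ 1 (fun _ => one_mul 1) (by simpa using hP)
  rw [LinearEquiv.mul_apply, hTσ, hPinv, Pi.one_apply, one_mul]

theorem UpsilonSub_inf_PermSub : UpsilonSub n ⊓ PermSub n = ⊥ := by
  rw [eq_bot_iff, UpsilonSub_eq, PermSub_eq]
  rintro T ⟨⟨ε, hε, -, hT⟩, ⟨σ, hσ⟩⟩
  have hε1 : ∀ i, ε i = 1 := by
    intro i
    have h := (hT (Pi.single i 1) i).symm.trans (hσ _ i)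
    rcases eq_or_ne (σ i) i with h' | h'
    · simpa [h'] using h
    · rcases hε i with h'' | h'' <;> simp [h', h''] at h
  ext x i
  simp [hT, hε1]

theorem LinLambda_finite (hn : 3 ≤ n) :
    (LinLambda n : Set ((Fin n → ℂ) ≃ₗ[ℂ] (Fin n → ℂ))).Finite := by
  have hS : (Set.univ.pi fun _ : Fin n =>
      Set.univ.pi fun _ : Fin n => ({0, 1, -1} : Set ℂ)).Finite :=
    Set.Finite.pi fun _ => Set.Finite.pi fun _ => Set.toFinite _
  have hf : Function.Injective
      fun (T : (Fin n → ℂ) ≃ₗ[ℂ] (Fin n → ℂ)) i j => T (Pi.single j 1) i :=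
    fun _ _ h => LinearEquiv.toLinearMap_injective (LinearMap.toMatrix'.injective h)
  refine (hS.preimage hf.injOn).subset fun T hT => ?_
  obtain ⟨σ, ε, hε, -, hTσ⟩ := (preserves_MH_iff hn T).mp hT
  simp only [Set.mem_preimage, Set.mem_univ_pi, hTσ, Pi.single_apply]
  intro i j
  split_ifs <;> rcases hε i with h | h <;> simp [h]

end Subgroups

/-- An invertible linear map of `ℂⁿ` preserves the Markoff–Hurwitz polynomial iff it is the
composition of a coordinate permutation and an even sign-change map; consequently
`Λ = Υₙ ⋊ Sₙ`, and in particular `Λ` is finite. -/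
theorem linear_automorphisms (n : ℕ) (hn : 3 ≤ n) :
    (∀ T : (Fin n → ℂ) ≃ₗ[ℂ] (Fin n → ℂ),
      (∀ x, MH n (T x) = MH n x) ↔
        ∃ (σ : Equiv.Perm (Fin n)) (ε : Fin n → ℂ),
          (∀ i, ε i = 1 ∨ ε i = -1) ∧ (∏ i, ε i) = 1 ∧
          ∀ (x : Fin n → ℂ) (i : Fin n), T x i = ε i * x (σ i)) ∧
    UpsilonSub n ≤ LinLambda n ∧ PermSub n ≤ LinLambda n ∧
    ((UpsilonSub n).subgroupOf (LinLambda n)).Normal ∧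
    UpsilonSub n ⊔ PermSub n = LinLambda n ∧
    UpsilonSub n ⊓ PermSub n = ⊥ ∧
    ((LinLambda n : Set ((Fin n → ℂ) ≃ₗ[ℂ] (Fin n → ℂ)))).Finite :=
  ⟨preserves_MH_iff hn, UpsilonSub_le_LinLambda, PermSub_le_LinLambda,
    UpsilonSub_subgroupOf_normal hn, UpsilonSub_sup_PermSub hn, UpsilonSub_inf_PermSub,
    LinLambda_finite hn⟩
end
end

section
/- (Fork Lemma.) Let n ≥ 3 and x = (x₁,…,xₙ) ∈ ℂⁿ, and let i ≠ j be indices in {1,…,n} such that xᵢ and x_j are not both zero. If |(∏_{k≠i} x_k) − xᵢ| ≤ |xᵢ| and |(∏_{k≠j} x_k) − x_j| ≤ |x_j|, then |∏_{k≠i,j} x_k| ≤ 2. -/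
open scoped BigOperators

/-! Write `P = ∏_{k≠i,j} x_k`. The two hypotheses read `‖x_j P − x_i‖ ≤ ‖x_i‖` and
`‖x_i P − x_j‖ ≤ ‖x_j‖`, so the triangle inequality gives `‖x_j‖‖P‖ ≤ 2‖x_i‖` and
`‖x_i‖‖P‖ ≤ 2‖x_j‖`. Adding them, `(‖x_i‖ + ‖x_j‖)‖P‖ ≤ 2(‖x_i‖ + ‖x_j‖)`, and
`‖x_i‖ + ‖x_j‖ > 0`. -/

section NormedDivisionRing

variable {R : Type*} [NormedDivisionRing R]

lemma norm_mul_norm_le_two_mul_of_norm_mul_sub_le {a b p : R} (h : ‖b * p - a‖ ≤ ‖a‖) :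
    ‖b‖ * ‖p‖ ≤ 2 * ‖a‖ := by
  have := norm_sub_norm_le (b * p) a
  rw [norm_mul] at this
  linarith

lemma norm_le_two_of_norm_mul_sub_le {a b p : R} (hab : ¬(a = 0 ∧ b = 0))
    (ha : ‖b * p - a‖ ≤ ‖a‖) (hb : ‖a * p - b‖ ≤ ‖b‖) : ‖p‖ ≤ 2 := by
  have hpos : 0 < ‖a‖ + ‖b‖ := by
    rcases not_and_or.1 hab with ha0 | hb0
    · exact add_pos_of_pos_of_nonneg (norm_pos_iff.2 ha0) (norm_nonneg b)
    · exact add_pos_of_nonneg_of_pos (norm_nonneg a) (norm_pos_iff.2 hb0)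
  have hsum : (‖a‖ + ‖b‖) * ‖p‖ ≤ (‖a‖ + ‖b‖) * 2 := by
    linarith [norm_mul_norm_le_two_mul_of_norm_mul_sub_le ha,
      norm_mul_norm_le_two_mul_of_norm_mul_sub_le hb]
  exact le_of_mul_le_mul_left hsum hpos

end NormedDivisionRing

theorem fork_lemma_general (n : ℕ) (x : Fin n → ℂ) (i j : Fin n) (hij : i ≠ j)
    (hnz : ¬ (x i = 0 ∧ x j = 0))
    (hi : ‖(∏ k ∈ Finset.univ.erase i, x k) - x i‖ ≤ ‖x i‖)
    (hj : ‖(∏ k ∈ Finset.univ.erase j, x k) - x j‖ ≤ ‖x j‖) :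
    ‖∏ k ∈ (Finset.univ.erase i).erase j, x k‖ ≤ 2 := by
  have hprod_i :
      ∏ k ∈ Finset.univ.erase i, x k = x j * ∏ k ∈ (Finset.univ.erase i).erase j, x k :=
    (Finset.mul_prod_erase _ _ (Finset.mem_erase.2 ⟨hij.symm, Finset.mem_univ j⟩)).symm
  have hprod_j :
      ∏ k ∈ Finset.univ.erase j, x k = x i * ∏ k ∈ (Finset.univ.erase i).erase j, x k := by
    rw [Finset.erase_right_comm,
      Finset.mul_prod_erase _ _ (Finset.mem_erase.2 ⟨hij, Finset.mem_univ i⟩)]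
  rw [hprod_i] at hi
  rw [hprod_j] at hj
  exact norm_le_two_of_norm_mul_sub_le hnz hi hj

/-- **Fork Lemma.** If `x ∈ ℂⁿ`, `i ≠ j`, `xᵢ, x_j` not both zero, and the edges of colors
`i` and `j` at the vertex `x` both point away from it, i.e.
`|(∏_{k≠i} x_k) − xᵢ| ≤ |xᵢ|` and `|(∏_{k≠j} x_k) − x_j| ≤ |x_j|`,
then `|∏_{k≠i,j} x_k| ≤ 2`. -/
theorem fork_lemma (n : ℕ) (hn : 3 ≤ n) (x : Fin n → ℂ) (i j : Fin n) (hij : i ≠ j)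
    (hnz : ¬ (x i = 0 ∧ x j = 0))
    (hi : ‖(∏ k ∈ Finset.univ.erase i, x k) - x i‖ ≤ ‖x i‖)
    (hj : ‖(∏ k ∈ Finset.univ.erase j, x k) - x j‖ ≤ ‖x j‖) :
    ‖∏ k ∈ (Finset.univ.erase i).erase j, x k‖ ≤ 2 :=
  fork_lemma_general n x i j hij hnz hi hj
end

section
/- Let n ≥ 3, let a ∈ ℂⁿ be non-dihedral with extended Hurwitz map φ = φ_a, and let K ≥ 2. Then the set 𝒜_φ(K) = {γ ∈ 𝒜 : |φ(γ)| ≤ K} is edge-connected. -/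
open scoped BigOperators

noncomputable section

namespace MarkoffHurwitz

/-- The Markoff–Hurwitz polynomial `H(x) = x₁² + ⋯ + xₙ² − x₁⋯xₙ`. -/
def MH (n : ℕ) (x : Fin n → ℂ) : ℂ := (∑ i, x i ^ 2) - ∏ i, x i

/-- The involution `bᵢ` replacing `xᵢ` by `(∏_{j≠i} x_j) − xᵢ`. -/
def bmap (n : ℕ) (i : Fin n) (x : Fin n → ℂ) : Fin n → ℂ :=
  Function.update x i ((∏ j ∈ Finset.univ.erase i, x j) - x i)

lemma bmap_apply_ne (n : ℕ) (i : Fin n) (x : Fin n → ℂ) {j : Fin n} (h : j ≠ i) :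
    bmap n i x j = x j := Function.update_of_ne h _ _

lemma bmap_apply_same (n : ℕ) (i : Fin n) (x : Fin n → ℂ) :
    bmap n i x i = (∏ j ∈ Finset.univ.erase i, x j) - x i := Function.update_self _ _ _

lemma prod_erase_bmap (n : ℕ) (i : Fin n) (x : Fin n → ℂ) :
    ∏ j ∈ Finset.univ.erase i, bmap n i x j = ∏ j ∈ Finset.univ.erase i, x j :=
  Finset.prod_congr rfl fun j hj => bmap_apply_ne n i x (Finset.ne_of_mem_erase hj)

lemma bmap_involutive (n : ℕ) (i : Fin n) : Function.Involutive (bmap n i) := by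
  intro x; funext j
  rcases eq_or_ne j i with rfl | h
  · rw [bmap_apply_same, prod_erase_bmap, bmap_apply_same]; ring
  · rw [bmap_apply_ne n i _ h, bmap_apply_ne n i x h]

/-- The relators `bᵢ²` of the Coxeter presentation. -/
def MHrels (n : ℕ) : Set (FreeGroup (Fin n)) :=
  Set.range fun i : Fin n => FreeGroup.of i * FreeGroup.of i

/-- The group `Γₙ = ⟨b₁,…,bₙ ∣ bᵢ² = 1⟩`, free product of `n` copies of `ℤ/2`. -/
abbrev Gam (n : ℕ) := PresentedGroup (MHrels n)

/-- The generator `bᵢ` as an element of `Γₙ`. -/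
def gen {n : ℕ} (i : Fin n) : Gam n := PresentedGroup.of i

lemma gen_mul_self {n : ℕ} (i : Fin n) : gen i * gen i = 1 := by
  have h : PresentedGroup.mk (MHrels n) (FreeGroup.of i * FreeGroup.of i) = 1 := by
    have : (FreeGroup.of i * FreeGroup.of i) ∈ Subgroup.normalClosure (MHrels n) :=
      Subgroup.subset_normalClosure ⟨i, rfl⟩
    exact (QuotientGroup.eq_one_iff _).2 this
  simpa [gen, PresentedGroup.of, map_mul] using h

lemma gen_inv {n : ℕ} (i : Fin n) : (gen i)⁻¹ = gen i :=
  inv_eq_of_mul_eq_one_right (gen_mul_self i)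

/-- `bᵢ` as a permutation of `ℂⁿ`. -/
def bperm (n : ℕ) (i : Fin n) : Equiv.Perm (Fin n → ℂ) := (bmap_involutive n i).toPerm

/-- The action of `Γₙ` on `ℂⁿ` by the involutions `bᵢ`. -/
def act (n : ℕ) : Gam n →* Equiv.Perm (Fin n → ℂ) :=
  PresentedGroup.toGroup (f := fun i => bperm n i) (by
    rintro r ⟨i, rfl⟩
    rw [map_mul, FreeGroup.lift_apply_of]
    refine Equiv.ext fun x => ?_
    simpa [bperm, Equiv.Perm.mul_apply] using bmap_involutive n i x)

lemma act_gen (n : ℕ) (i : Fin n) : act n (gen i) = bperm n i :=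
  PresentedGroup.toGroup.of _

/-- The subgroup `⟨bᵢ, b_j⟩` associated to an unordered pair `{i,j}`. -/
def pairSub {n : ℕ} : Sym2 (Fin n) → Subgroup (Gam n) :=
  Sym2.lift ⟨fun i j => Subgroup.closure {gen i, gen j}, fun i j => by
    show Subgroup.closure {gen i, gen j} = Subgroup.closure {gen j, gen i}
    rw [Set.pair_comm]⟩

lemma pairSub_mk {n : ℕ} (i j : Fin n) :
    pairSub s(i, j) = Subgroup.closure {gen i, gen j} := rfl

/-- An alternating geodesic in the Cayley tree of `Γₙ`: an unordered pair `{i,j}`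
of distinct colors together with a coset `g⟨bᵢ,b_j⟩`. -/
structure AltGeo (n : ℕ) where
  pair : Sym2 (Fin n)
  nd : ¬ pair.IsDiag
  coset : Gam n ⧸ pairSub pair

/-- Coordinates outside of a pair `{i,j}`. -/
def offPair {n : ℕ} (s : Sym2 (Fin n)) : Finset (Fin n) :=
  Finset.univ.filter fun k => ¬ k ∈ s

/-- Key invariance: the coordinates off the pair do not change when moving along the coset. -/
lemma coords_eq {n : ℕ} (a : Fin n → ℂ) (s : Sym2 (Fin n)) {t : Gam n}
    (ht : t ∈ pairSub s) (g : Gam n) {k : Fin n} (hk : ¬ k ∈ s) :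
    act n (g * t)⁻¹ a k = act n g⁻¹ a k := by
  induction s using Sym2.ind with
  | _ i j =>
    rw [pairSub_mk] at ht
    induction ht using Subgroup.closure_induction generalizing g with
    | mem x hx =>
      have key : ∀ m : Fin n, m ∈ (s(i, j) : Sym2 (Fin n)) → ∀ g : Gam n,
          act n (g * gen m)⁻¹ a k = act n g⁻¹ a k := by
        intro m hm g
        rw [mul_inv_rev, gen_inv, map_mul, Equiv.Perm.mul_apply, act_gen]
        have hkm : k ≠ m := fun h => hk (h ▸ hm)
        exact bmap_apply_ne n m _ hkm
      rcases hx with rfl | rfl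
      · exact key i (Sym2.mem_mk_left i j) g
      · exact key j (Sym2.mem_mk_right i j) g
    | one => rw [mul_one]
    | mul x y hx hy ihx ihy => rw [← mul_assoc]; rw [ihy, ihx]
    | inv x hx ih =>
      have := ih (g := g * x⁻¹)
      rw [mul_assoc, inv_mul_cancel, mul_one] at this
      exact this.symm

/-- Representative version of the extended Hurwitz map. -/
def phiRep (n : ℕ) (a : Fin n → ℂ) (s : Sym2 (Fin n)) (g : Gam n) : ℂ :=
  ∏ k ∈ offPair s, act n g⁻¹ a k

/-- Representative version of the square sum weight. -/
def sigRep (n : ℕ) (a : Fin n → ℂ) (s : Sym2 (Fin n)) (g : Gam n) : ℂ :=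
  ∑ k ∈ offPair s, (act n g⁻¹ a k) ^ 2

/-- The extended Hurwitz map `φ_a : 𝒜 → ℂ`, `φ(γ) = ∏_{k∉{i,j}} x_k`. -/
def phiA (n : ℕ) (a : Fin n → ℂ) (γ : AltGeo n) : ℂ :=
  Quotient.liftOn' γ.coset (phiRep n a γ.pair) (by
    intro g h hgh
    have hmem : g⁻¹ * h ∈ pairSub γ.pair := QuotientGroup.leftRel_apply.mp hgh
    have : h = g * (g⁻¹ * h) := by group
    rw [this]
    unfold phiRep
    exact (Finset.prod_congr rfl fun k hk =>
      (coords_eq a γ.pair hmem g (Finset.mem_filter.mp hk).2)).symm)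

/-- The square sum weight `σ_a : 𝒜 → ℂ`, `σ(γ) = ∑_{k∉{i,j}} x_k²`. -/
def sigA (n : ℕ) (a : Fin n → ℂ) (γ : AltGeo n) : ℂ :=
  Quotient.liftOn' γ.coset (sigRep n a γ.pair) (by
    intro g h hgh
    have hmem : g⁻¹ * h ∈ pairSub γ.pair := QuotientGroup.leftRel_apply.mp hgh
    have : h = g * (g⁻¹ * h) := by group
    rw [this]
    unfold sigRep
    exact (Finset.sum_congr rfl fun k hk => by
      rw [coords_eq a γ.pair hmem g (Finset.mem_filter.mp hk).2]).symm)

/-- The set `𝒜_φ(K)` of alternating geodesics with `|φ(γ)| ≤ K`. -/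
def AK (n : ℕ) (a : Fin n → ℂ) (K : ℝ) : Set (AltGeo n) :=
  {γ | ‖phiA n a γ‖ ≤ K}

/-- The Bowditch domain `𝒟 ⊆ ℂⁿ`. -/
def BD (n : ℕ) : Set (Fin n → ℂ) :=
  {a | (∀ γ : AltGeo n, phiA n a γ ∉ (fun r : ℝ => (r : ℂ)) '' Set.Icc (-2 : ℝ) 2) ∧
    ∃ K : ℝ, 2 < K ∧ (AK n a K).Finite}



/-- Word length of `g ∈ Γₙ` with respect to the generators `b₁,…,bₙ`. -/
def glen (n : ℕ) (g : Gam n) : ℕ :=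
  sInf {m | ∃ l : List (Fin n), l.length = m ∧ g = (l.map gen).prod}

/-- The alternating geodesic `[g;{i,k}]` through the vertex `g` with colors `{i,k}`. -/
def mkGeo {n : ℕ} (i k : Fin n) (h : i ≠ k) (g : Gam n) : AltGeo n :=
  ⟨s(i, k), by rwa [Sym2.mk_isDiag_iff], QuotientGroup.mk g⟩

/-- `F : 𝒜 → ℕ` is the Fibonacci function relative to the root `v₀ = 1`:
`F(γ) = 1` if the root lies on `γ`, and otherwise `F(γ) = F([v*;{i,k}]) + F([v*;{j,k}])`,
where `v*` is the vertex of `γ` closest to the root and `k` is the label of the first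
edge of the geodesic from `v*` to the root. -/
def IsFib (n : ℕ) (F : AltGeo n → ℕ) : Prop :=
  (∀ γ : AltGeo n, γ.coset = QuotientGroup.mk 1 → F γ = 1) ∧
  (∀ γ : AltGeo n, γ.coset ≠ QuotientGroup.mk 1 →
    ∀ g : Gam n, QuotientGroup.mk g = γ.coset →
      (∀ h : Gam n, QuotientGroup.mk h = γ.coset → glen n g ≤ glen n h) →
      ∀ i j k : Fin n, γ.pair = s(i, j) → ∀ (hki : k ≠ i) (hkj : k ≠ j),
        glen n (g * gen k) < glen n g →
        F γ = F (mkGeo i k hki.symm g) + F (mkGeo j k hkj.symm g))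

/-- `log⁺ t = max (0, log t)`. -/
def logp (t : ℝ) : ℝ := max 0 (Real.log t)

/-- The subgroup `⟨b_j : j ≠ i⟩`. -/
def hatSub (n : ℕ) (i : Fin n) : Subgroup (Gam n) :=
  Subgroup.closure {g | ∃ j : Fin n, j ≠ i ∧ g = gen j}

lemma coord_eq (n : ℕ) (a : Fin n → ℂ) (i : Fin n) {t : Gam n}
    (ht : t ∈ hatSub n i) (g : Gam n) :
    act n (g * t)⁻¹ a i = act n g⁻¹ a i := by
  induction ht using Subgroup.closure_induction generalizing g with
  | mem x hx =>
    obtain ⟨j, hji, rfl⟩ := hx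
    rw [mul_inv_rev, gen_inv, map_mul, Equiv.Perm.mul_apply, act_gen]
    exact bmap_apply_ne n j _ hji.symm
  | one => rw [mul_one]
  | mul x y hx hy ihx ihy => rw [← mul_assoc, ihy, ihx]
  | inv x hx ih =>
    have := ih (g := g * x⁻¹)
    rw [mul_assoc, inv_mul_cancel, mul_one] at this
    exact this.symm

/-- For a coset `X = g⟨b_j : j ≠ i⟩ ∈ 𝒳ᵢ`, the (constant) `i`-th coordinate `φ(X)`. -/
def coordX (n : ℕ) (a : Fin n → ℂ) (i : Fin n) (X : Gam n ⧸ hatSub n i) : ℂ :=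
  Quotient.liftOn' X (fun g => act n g⁻¹ a i) (by
    intro g h hgh
    have hmem : g⁻¹ * h ∈ hatSub n i := QuotientGroup.leftRel_apply.mp hgh
    have hh : h = g * (g⁻¹ * h) := by group
    show act n g⁻¹ a i = act n h⁻¹ a i
    rw [hh, coord_eq n a i hmem g])

/-- `a ∈ ℂⁿ` is dihedral if some point of its `Γₙ`-orbit has two vanishing coordinates. -/
def Dihedral (n : ℕ) (a : Fin n → ℂ) : Prop :=
  ∃ (g : Gam n) (i j : Fin n), i ≠ j ∧ act n g a i = 0 ∧ act n g a j = 0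

/-- The alternating geodesic `γ` contains the edge of color `i` incident to the vertex `g`. -/
def containsEdge {n : ℕ} (γ : AltGeo n) (g : Gam n) (i : Fin n) : Prop :=
  i ∈ γ.pair ∧ (QuotientGroup.mk g : Gam n ⧸ pairSub γ.pair) = γ.coset

/-- Two alternating geodesics share an edge of the tree. -/
def ShareEdge {n : ℕ} (α β : AltGeo n) : Prop :=
  ∃ (g : Gam n) (i : Fin n), containsEdge α g i ∧ containsEdge β g i

/-- A set of alternating geodesics is edge-connected. -/
def EdgeConnected {n : ℕ} (P : Set (AltGeo n)) : Prop :=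
  ∀ α ∈ P, ∀ β ∈ P, ∃ (m : ℕ) (c : ℕ → AltGeo n),
    c 0 = α ∧ c m = β ∧ (∀ t ≤ m, c t ∈ P) ∧ ∀ t < m, ShareEdge (c t) (c (t + 1))

/-- `h(z) = 1 − √(1 − 4/z²)`, with the principal square root (positive real part). -/
def hfun (z : ℂ) : ℂ := 1 - (1 - 4 / z ^ 2) ^ ((1 : ℂ) / 2)

/-!
Fix `K ≥ 2` and write `P_A = ∏_{l ∉ A} |x_l|` for the coordinates `x` at a vertex, so that
`|φ|` of the geodesic with colours `{p, q}` is `P_{p,q}`. At a single vertex, replacing `q` by a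
coordinate of larger modulus does not increase `P_{p,q}`, so every small geodesic there is
linked through shared edges to the one whose colours are the two largest coordinates.

To link small geodesics at distant vertices, follow the reduced word between the vertices. At
each step either the current geodesic contains the next edge, or some small geodesic through the
current vertex contains it, or every geodesic with the colour `c` of that edge is large. In the
last case `K |x_c| ≤ P_c`, and crossing the edge replaces `x_c` by `∏_{l ≠ c} x_l − x_c`, of
modulus at least `(1 − 1/K) P_c`. From then on the invariant "all `P_{s,t}` exceed `K`, and the
last changed coordinate `x_c` has `(K − 1) P_c ≤ K |x_c|`" propagates along every reduced path,
so no small geodesic remains ahead.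
-/

section ProdCompl

variable {ι : Type*} [Fintype ι] [DecidableEq ι]

def prodCompl (z : ι → ℝ) (A : Finset ι) : ℝ := ∏ l ∈ Aᶜ, z l

lemma prodCompl_nonneg {z : ι → ℝ} (hz : 0 ≤ z) (A : Finset ι) : 0 ≤ prodCompl z A :=
  Finset.prod_nonneg fun l _ => hz l

lemma prodCompl_eq_mul_insert (z : ι → ℝ) {A : Finset ι} {d : ι} (hd : d ∉ A) :
    prodCompl z A = z d * prodCompl z (insert d A) := by
  rw [prodCompl, prodCompl, Finset.compl_insert,
    Finset.mul_prod_erase _ _ (Finset.mem_compl.2 hd)]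

lemma prodCompl_congr {z z' : ι → ℝ} {A : Finset ι} (h : ∀ l ∉ A, z' l = z l) :
    prodCompl z' A = prodCompl z A :=
  Finset.prod_congr rfl fun l hl => h l (Finset.mem_compl.1 hl)

lemma prodCompl_pair_le_of_le {z : ι → ℝ} (hz : 0 ≤ z) {p q q' : ι} (hqp : q ≠ p)
    (hq'p : q' ≠ p) (hle : z q ≤ z q') : prodCompl z {p, q'} ≤ prodCompl z {p, q} := by
  rcases eq_or_ne q q' with rfl | hqq'
  · rfl
  have h1 : prodCompl z {p, q'} = z q * prodCompl z {q, p, q'} :=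
    prodCompl_eq_mul_insert z (by simp [hqp, hqq'])
  have h2 : prodCompl z {p, q} = z q' * prodCompl z {q, p, q'} := by
    rw [prodCompl_eq_mul_insert z (d := q') (by simp [hq'p, hqq'.symm])]
    congr 2
    grind
  rw [h1, h2]
  exact mul_le_mul_of_nonneg_right hle (prodCompl_nonneg hz _)

variable (K : ℝ)

def PairsExceed (z : ι → ℝ) : Prop :=
  ∀ s t, s ≠ t → K < prodCompl z {s, t}

def Dominant (z : ι → ℝ) (c : ι) : Prop :=
  (K - 1) * prodCompl z {c} ≤ K * z c

variable {K}

/-- `z'` stands for the moduli after crossing the `c`-edge, where `x_c` becomes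
`∏_{l ≠ c} x_l - x_c`. -/
lemma pairsExceed_dominant_of_exchange (hK : 2 ≤ K) {z z' : ι → ℝ} (hz : 0 ≤ z) {c : ι}
    (hblock : ∀ m, m ≠ c → K < prodCompl z {m, c}) (hsmall : K * z c ≤ prodCompl z {c})
    (hz' : ∀ l, l ≠ c → z' l = z l) (hc : prodCompl z {c} - z c ≤ z' c) :
    PairsExceed K z' ∧ Dominant K z' c := by
  have hcompl (A : Finset ι) (hA : c ∈ A) : prodCompl z' A = prodCompl z A :=
    prodCompl_congr fun l hl => hz' l (by rintro rfl; exact hl hA)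
  have hdom : (K - 1) * prodCompl z {c} ≤ K * z' c := by nlinarith
  refine ⟨fun s t hst => ?_, by rwa [Dominant, hcompl _ (Finset.mem_singleton_self c)]⟩
  by_cases hsc : s = c
  · subst hsc
    rw [hcompl _ (by simp), Finset.pair_comm]
    exact hblock t (Ne.symm hst)
  by_cases htc : t = c
  · subst htc
    rw [hcompl _ (by simp)]
    exact hblock s hst
  set R := prodCompl z {c, s, t}
  have hR : 0 ≤ R := prodCompl_nonneg hz _
  have hst' : prodCompl z' {s, t} = z' c * R := by
    rw [prodCompl_eq_mul_insert z' (d := c) (by simp [Ne.symm hsc, Ne.symm htc]),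
      hcompl _ (by simp)]
  have hs : prodCompl z {s, c} = z t * R := by
    rw [prodCompl_eq_mul_insert z (d := t) (by simp [Ne.symm hst, htc])]
    congr 2
    grind
  have ht : prodCompl z {t, c} = z s * R := by
    rw [prodCompl_eq_mul_insert z (d := s) (by simp [hst, hsc])]
    congr 2
    grind
  have hN : prodCompl z {c} = z s * (z t * R) := by
    rw [prodCompl_eq_mul_insert z (d := s) (by simp [hsc]), ← hs]
  have hsR := hblock s hsc
  have htR := hblock t htc
  rw [hs] at hsR
  rw [ht] at htR
  have hKK : K * K < (z t * R) * (z s * R) := mul_lt_mul'' hsR htR (by linarith) (by linarith)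
  rw [hst']
  rw [hN] at hdom
  -- `K z'_c R ≥ (K - 1) P_c R = (K - 1) P_{s,c} P_{t,c} > (K - 1) K² ≥ K²`
  nlinarith [mul_le_mul_of_nonneg_right hdom hR]

lemma mul_le_prodCompl_of_dominant (hK : 2 ≤ K) {z : ι → ℝ} (hz : 0 ≤ z) {c d : ι}
    (hdc : d ≠ c) (hbig : PairsExceed K z) (hdom : Dominant K z c) :
    K * z d ≤ prodCompl z {d} := by
  set Q := prodCompl z {d, c}
  have hQ : K < Q := hbig d c hdc
  have hc : prodCompl z {c} = z d * Q := prodCompl_eq_mul_insert z (by simpa using hdc)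
  have hd : prodCompl z {d} = z c * Q := by
    rw [prodCompl_eq_mul_insert z (d := c) (by simpa using hdc.symm), Finset.pair_comm]
  rw [Dominant, hc] at hdom
  rw [hd]
  -- `K z_c Q ≥ (K - 1) z_d Q² ≥ (K - 1) K² z_d ≥ K² z_d`
  have hQQ : (K - 1) * z d * (K * K) ≤ (K - 1) * z d * (Q * Q) :=
    mul_le_mul_of_nonneg_left (by nlinarith) (mul_nonneg (by linarith) (hz d))
  have hK2 : K * (K * z d) ≤ (K - 1) * z d * (K * K) := by
    nlinarith [mul_nonneg (mul_nonneg (mul_self_nonneg K) (hz d)) (by linarith : (0 : ℝ) ≤ K - 2)]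
  refine le_of_mul_le_mul_left ?_ (by linarith : 0 < K)
  nlinarith [mul_le_mul_of_nonneg_right hdom (by linarith : (0 : ℝ) ≤ Q)]

lemma mul_le_prodCompl_of_pair_le (hK : 0 ≤ K) {z : ι → ℝ} (hz : 0 ≤ z) {i j c : ι}
    (hij : i ≠ j) (hic : i ≠ c) (hjc : j ≠ c) (hi : K < prodCompl z {i, c})
    (hj : K < prodCompl z {j, c}) (hsmall : prodCompl z {i, j} ≤ K) :
    K * z c ≤ prodCompl z {c} := by
  set R := prodCompl z {i, j, c}
  have hR : 0 ≤ R := prodCompl_nonneg hz _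
  have hij' : prodCompl z {i, j} = z c * R := by
    rw [prodCompl_eq_mul_insert z (d := c) (by simp [hic.symm, hjc.symm])]
    congr 2
    grind
  have hi' : prodCompl z {i, c} = z j * R := by
    rw [prodCompl_eq_mul_insert z (d := j) (by simp [hij.symm, hjc])]
    congr 2
    grind
  have hj' : prodCompl z {j, c} = z i * R :=
    prodCompl_eq_mul_insert z (d := i) (by simp [hij, hic])
  have hN : prodCompl z {c} = z i * (z j * R) := by
    rw [prodCompl_eq_mul_insert z (d := i) (by simp [hic]), hi']
  rw [hij'] at hsmall
  rw [hi'] at hi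
  rw [hj'] at hj
  have hKK : K * K < (z i * R) * (z j * R) := mul_lt_mul'' hj hi hK hK
  -- `K z_c R ≤ K² < P_{j,c} P_{i,c} = P_c R`
  have hpos : 0 < (prodCompl z {c} - K * z c) * R := by
    rw [hN]
    nlinarith [mul_le_mul_of_nonneg_left hsmall hK]
  linarith [pos_of_mul_pos_left hpos hR]

end ProdCompl

section Vertex

variable {n : ℕ}

def coordNorm (a : Fin n → ℂ) (g : Gam n) (k : Fin n) : ℝ := ‖act n g⁻¹ a k‖

lemma coordNorm_nonneg (a : Fin n → ℂ) (g : Gam n) : 0 ≤ coordNorm a g :=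
  fun _ => norm_nonneg _

lemma act_mul_gen_inv (a : Fin n → ℂ) (g : Gam n) (c : Fin n) :
    act n (g * gen c)⁻¹ a = bmap n c (act n g⁻¹ a) := by
  rw [mul_inv_rev, gen_inv, map_mul, Equiv.Perm.mul_apply, act_gen]
  rfl

lemma coordNorm_mul_gen_of_ne (a : Fin n → ℂ) (g : Gam n) {c k : Fin n} (hk : k ≠ c) :
    coordNorm a (g * gen c) k = coordNorm a g k := by
  rw [coordNorm, act_mul_gen_inv, bmap_apply_ne n c _ hk, coordNorm]

lemma prodCompl_sub_le_coordNorm_mul_gen (a : Fin n → ℂ) (g : Gam n) (c : Fin n) :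
    prodCompl (coordNorm a g) {c} - coordNorm a g c ≤ coordNorm a (g * gen c) c := by
  have hprod : prodCompl (coordNorm a g) {c} = ‖∏ j ∈ Finset.univ.erase c, act n g⁻¹ a j‖ := by
    rw [norm_prod, prodCompl, Finset.compl_singleton]
    rfl
  rw [hprod, coordNorm, coordNorm, act_mul_gen_inv, bmap_apply_same]
  exact norm_sub_norm_le _ _

lemma pairsExceed_dominant_mul_gen {K : ℝ} (hK : 2 ≤ K) (a : Fin n → ℂ) {g : Gam n}
    {c : Fin n} (hblock : ∀ m, m ≠ c → K < prodCompl (coordNorm a g) {m, c})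
    (hsmall : K * coordNorm a g c ≤ prodCompl (coordNorm a g) {c}) :
    PairsExceed K (coordNorm a (g * gen c)) ∧ Dominant K (coordNorm a (g * gen c)) c :=
  pairsExceed_dominant_of_exchange hK (coordNorm_nonneg a g) hblock hsmall
    (fun _ hk => coordNorm_mul_gen_of_ne a g hk) (prodCompl_sub_le_coordNorm_mul_gen a g c)

lemma pairsExceed_of_isChain {K : ℝ} (hK : 2 ≤ K) (a : Fin n → ℂ) {c : Fin n}
    {l : List (Fin n)} (hchain : (c :: l).IsChain (· ≠ ·)) {g : Gam n}
    (hbig : PairsExceed K (coordNorm a g)) (hdom : Dominant K (coordNorm a g) c) :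
    PairsExceed K (coordNorm a (g * (l.map gen).prod)) := by
  induction l generalizing c g with
  | nil => simpa using hbig
  | cons d l ih =>
    obtain ⟨hcd, hchain'⟩ := List.isChain_cons_cons.1 hchain
    have hstep := pairsExceed_dominant_mul_gen hK a (c := d) (fun m hm => hbig m d hm)
      (mul_le_prodCompl_of_dominant hK (coordNorm_nonneg a g) (Ne.symm hcd) hbig hdom)
    simpa [mul_assoc] using ih hchain' hstep.1 hstep.2

lemma exists_eq_mkGeo {α : AltGeo n} {u : Gam n} (hu : QuotientGroup.mk u = α.coset) :
    ∃ (p q : Fin n) (h : p ≠ q), α = mkGeo p q h u := by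
  obtain ⟨s, nd, coset⟩ := α
  induction s using Sym2.ind with
  | _ p q =>
    exact ⟨p, q, fun h => nd (Sym2.mk_isDiag_iff.2 h), by dsimp only at hu; rw [← hu]; rfl⟩

lemma mkGeo_comm {p q : Fin n} (h : p ≠ q) (u : Gam n) :
    mkGeo p q h u = mkGeo q p h.symm u := by
  have key : ∀ (s s' : Sym2 (Fin n)) (hs : s = s') (nd : ¬ s.IsDiag) (nd' : ¬ s'.IsDiag),
      (⟨s, nd, QuotientGroup.mk u⟩ : AltGeo n) = ⟨s', nd', QuotientGroup.mk u⟩ := by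
    rintro s _ rfl _ _
    rfl
  exact key _ _ Sym2.eq_swap _ _

lemma mkGeo_mul_gen_left {p q : Fin n} (h : p ≠ q) (u : Gam n) :
    mkGeo p q h (u * gen p) = mkGeo p q h u := by
  simp only [mkGeo, AltGeo.mk.injEq, heq_eq_eq, true_and]
  exact QuotientGroup.mk_mul_of_mem u (Subgroup.subset_closure (Set.mem_insert _ _))

lemma mkGeo_mem_AK_iff (a : Fin n → ℂ) (K : ℝ) {p q : Fin n} (h : p ≠ q) (u : Gam n) :
    mkGeo p q h u ∈ AK n a K ↔ prodCompl (coordNorm a u) {p, q} ≤ K := by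
  have hoff : offPair s(p, q) = {p, q}ᶜ := by
    ext k
    simp [offPair]
  change ‖∏ k ∈ offPair s(p, q), act n u⁻¹ a k‖ ≤ K ↔ _
  rw [norm_prod, hoff]
  rfl

end Vertex

section Linking

variable {n : ℕ}

def EdgeAdj (P : Set (AltGeo n)) (α β : AltGeo n) : Prop :=
  α ∈ P ∧ β ∈ P ∧ ShareEdge α β

instance (P : Set (AltGeo n)) : Std.Symm (EdgeAdj P) where
  symm _ _ := fun ⟨hα, hβ, g, i, h₁, h₂⟩ => ⟨hβ, hα, g, i, h₂, h₁⟩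

lemma edgeConnected_of_reflTransGen {P : Set (AltGeo n)}
    (h : ∀ α ∈ P, ∀ β ∈ P, Relation.ReflTransGen (EdgeAdj P) α β) : EdgeConnected P := by
  intro α hα β hβ
  induction h α hα β hβ with
  | refl => exact ⟨0, fun _ => α, rfl, rfl, fun _ _ => hα, fun _ h => absurd h (by omega)⟩
  | @tail β γ _ hβγ ih =>
    obtain ⟨m, c, h0, hm, hmem, hshare⟩ := ih hβγ.1
    refine ⟨m + 1, fun t => if t ≤ m then c t else γ, by simpa using h0, by simp, ?_, ?_⟩
    · intro t ht
      dsimp only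
      split_ifs with htm
      exacts [hmem t htm, hβγ.2.1]
    · intro t ht
      rcases Nat.lt_succ_iff_lt_or_eq.1 ht with ht | rfl
      · simpa [ht.le, Nat.succ_le_of_lt ht] using hshare t ht
      · simpa [hm] using hβγ.2.2

lemma mkGeo_edgeAdj_of_le (a : Fin n → ℂ) {K : ℝ} (u : Gam n)
    {p q q' : Fin n} (h : p ≠ q) (h' : p ≠ q') (hle : coordNorm a u q ≤ coordNorm a u q')
    (hmem : mkGeo p q h u ∈ AK n a K) : EdgeAdj (AK n a K) (mkGeo p q h u) (mkGeo p q' h' u) := by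
  refine ⟨hmem, ?_, u, p, ⟨Sym2.mem_mk_left _ _, rfl⟩, ⟨Sym2.mem_mk_left _ _, rfl⟩⟩
  rw [mkGeo_mem_AK_iff] at hmem ⊢
  exact (prodCompl_pair_le_of_le (coordNorm_nonneg a u) h.symm h'.symm hle).trans hmem

lemma reflTransGen_mkGeo_maxPair (a : Fin n → ℂ) {K : ℝ} (u : Gam n)
    {t₁ t₂ : Fin n} (h₁₂ : t₁ ≠ t₂) (ht₁ : ∀ l, coordNorm a u l ≤ coordNorm a u t₁)
    (ht₂ : ∀ l, l ≠ t₁ → coordNorm a u l ≤ coordNorm a u t₂) {p q : Fin n} (h : p ≠ q)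
    (hmem : mkGeo p q h u ∈ AK n a K) :
    Relation.ReflTransGen (EdgeAdj (AK n a K)) (mkGeo p q h u) (mkGeo t₁ t₂ h₁₂ u) := by
  have hfirst (r : Fin n) (hr : t₁ ≠ r) (hmem : mkGeo t₁ r hr u ∈ AK n a K) :
      Relation.ReflTransGen (EdgeAdj (AK n a K)) (mkGeo t₁ r hr u) (mkGeo t₁ t₂ h₁₂ u) :=
    .single (mkGeo_edgeAdj_of_le a u hr h₁₂ (ht₂ r hr.symm) hmem)
  by_cases hp : p = t₁
  · subst hp
    exact hfirst q h hmem
  by_cases hq : q = t₁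
  · subst hq
    rw [mkGeo_comm] at hmem ⊢
    exact hfirst p h.symm hmem
  have hstep := mkGeo_edgeAdj_of_le a u h hp (ht₁ q) hmem
  rw [mkGeo_comm hp] at hstep
  exact .head hstep (hfirst p (Ne.symm hp) hstep.2.1)

lemma reflTransGen_of_mk_eq_mk (a : Fin n → ℂ) {K : ℝ} {u : Gam n}
    {α β : AltGeo n} (hα : α ∈ AK n a K) (hβ : β ∈ AK n a K) (huα : QuotientGroup.mk u = α.coset)
    (huβ : QuotientGroup.mk u = β.coset) : Relation.ReflTransGen (EdgeAdj (AK n a K)) α β := by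
  obtain ⟨p, q, hpq, rfl⟩ := exists_eq_mkGeo huα
  obtain ⟨p', q', hpq', rfl⟩ := exists_eq_mkGeo huβ
  obtain ⟨t₁, -, ht₁⟩ :=
    Finset.exists_max_image Finset.univ (coordNorm a u) ⟨p, Finset.mem_univ _⟩
  have hne : (Finset.univ.erase t₁).Nonempty := by
    by_cases hp : p = t₁
    · exact ⟨q, Finset.mem_erase.2 ⟨hp ▸ hpq.symm, Finset.mem_univ _⟩⟩
    · exact ⟨p, Finset.mem_erase.2 ⟨hp, Finset.mem_univ _⟩⟩
  obtain ⟨t₂, ht₂mem, ht₂⟩ := Finset.exists_max_image _ (coordNorm a u) hne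
  have h₁₂ : t₁ ≠ t₂ := (Finset.ne_of_mem_erase ht₂mem).symm
  have hmax (p q : Fin n) (h : p ≠ q) (hmem : mkGeo p q h u ∈ AK n a K) :=
    reflTransGen_mkGeo_maxPair a u h₁₂ (fun l => ht₁ l (Finset.mem_univ l))
      (fun l hl => ht₂ l (Finset.mem_erase.2 ⟨hl, Finset.mem_univ l⟩)) h hmem
  exact (hmax p q hpq hα).trans (symm_of _ (hmax p' q' hpq' hβ))

end Linking

section Reduced

variable {n : ℕ}

lemma exists_isChain_prod_eq_gen_mul (c : Fin n) {w : List (Fin n)} (hw : w.IsChain (· ≠ ·)) :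
    ∃ w' : List (Fin n), w'.IsChain (· ≠ ·) ∧ (w'.map gen).prod = gen c * (w.map gen).prod := by
  match w, hw with
  | [], _ => exact ⟨[c], List.isChain_singleton c, by simp⟩
  | d :: l, hw =>
    by_cases hdc : d = c
    · subst hdc
      exact ⟨l, hw.tail, by simp [← mul_assoc, gen_mul_self]⟩
    · exact ⟨c :: d :: l, hw.cons_cons (Ne.symm hdc), by simp⟩

lemma exists_isChain_prod_eq (g : Gam n) :
    ∃ w : List (Fin n), w.IsChain (· ≠ ·) ∧ (w.map gen).prod = g := by
  have hg : g ∈ Subgroup.closure (Set.range (gen : Fin n → Gam n)) := by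
    change g ∈ Subgroup.closure (Set.range PresentedGroup.of)
    rw [PresentedGroup.closure_range_of]
    trivial
  induction hg using Subgroup.closure_induction_left with
  | one => exact ⟨[], List.isChain_nil, rfl⟩
  | mul_left _ hx _ _ ih =>
    obtain ⟨c, rfl⟩ := hx
    obtain ⟨w, hw, rfl⟩ := ih
    exact exists_isChain_prod_eq_gen_mul c hw
  | inv_mul_cancel _ hx _ _ ih =>
    obtain ⟨c, rfl⟩ := hx
    obtain ⟨w, hw, rfl⟩ := ih
    rw [gen_inv]
    exact exists_isChain_prod_eq_gen_mul c hw

lemma pairsExceed_beyond_blocked_edge (a : Fin n → ℂ) {K : ℝ} (hK : 2 ≤ K) {u : Gam n}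
    {c p q : Fin n} (hpq : p ≠ q) (hpc : p ≠ c) (hqc : q ≠ c)
    (hblock : ∀ m, m ≠ c → K < prodCompl (coordNorm a u) {m, c})
    (hmem : mkGeo p q hpq u ∈ AK n a K) {l : List (Fin n)} (hl : (c :: l).IsChain (· ≠ ·)) :
    PairsExceed K (coordNorm a (u * gen c * (l.map gen).prod)) := by
  have hsmall := mul_le_prodCompl_of_pair_le (by linarith) (coordNorm_nonneg a u) hpq hpc hqc
    (hblock p hpc) (hblock q hqc) ((mkGeo_mem_AK_iff a K hpq u).1 hmem)
  have hinv := pairsExceed_dominant_mul_gen hK a hblock hsmall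
  exact pairsExceed_of_isChain hK a hl hinv.1 hinv.2

lemma reflTransGen_of_isChain (a : Fin n → ℂ) {K : ℝ} (hK : 2 ≤ K) (w : List (Fin n))
    (hw : w.IsChain (· ≠ ·)) (u : Gam n) {α β : AltGeo n} (hα : α ∈ AK n a K)
    (hβ : β ∈ AK n a K) (hu : QuotientGroup.mk u = α.coset)
    (hv : QuotientGroup.mk (u * (w.map gen).prod) = β.coset) :
    Relation.ReflTransGen (EdgeAdj (AK n a K)) α β := by
  induction w generalizing u α with
  | nil => exact reflTransGen_of_mk_eq_mk a hα hβ hu (by simpa using hv)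
  | cons c l ih =>
    have hv' : QuotientGroup.mk (u * gen c * (l.map gen).prod) = β.coset := by
      simpa [mul_assoc] using hv
    obtain ⟨p, q, hpq, rfl⟩ := exists_eq_mkGeo hu
    by_cases hcα : c = p ∨ c = q
    · have hcα' : mkGeo p q hpq (u * gen c) = mkGeo p q hpq u := by
        rcases hcα with rfl | rfl
        · exact mkGeo_mul_gen_left hpq u
        · rw [mkGeo_comm, mkGeo_mul_gen_left, mkGeo_comm]
      exact ih hw.tail (u * gen c) (hcα' ▸ hα) (by rw [← hcα']; rfl) hv'
    rw [not_or] at hcα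
    by_cases hfree : ∃ (m : Fin n) (hm : c ≠ m), mkGeo c m hm u ∈ AK n a K
    · obtain ⟨m, hm, hγ⟩ := hfree
      refine (reflTransGen_of_mk_eq_mk a hα hγ rfl rfl).trans ?_
      exact ih hw.tail (u * gen c) hγ (by rw [← mkGeo_mul_gen_left hm u]; rfl) hv'
    simp only [not_exists] at hfree
    have hblock (m : Fin n) (hm : m ≠ c) : K < prodCompl (coordNorm a u) {m, c} := by
      rw [Finset.pair_comm]
      exact not_le.1 ((mkGeo_mem_AK_iff a K hm.symm u).not.1 (hfree m hm.symm))
    obtain ⟨s, t, hst, rfl⟩ := exists_eq_mkGeo hv'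
    exact absurd ((mkGeo_mem_AK_iff a K hst _).1 hβ) (not_le.2
      (pairsExceed_beyond_blocked_edge a hK hpq (Ne.symm hcα.1) (Ne.symm hcα.2) hblock hα hw
        s t hst))

end Reduced

theorem edge_connected_general (n : ℕ) (a : Fin n → ℂ)
    (K : ℝ) (hK : 2 ≤ K) : EdgeConnected (AK n a K) := by
  refine edgeConnected_of_reflTransGen fun α hα β hβ => ?_
  obtain ⟨u, hu⟩ := QuotientGroup.mk_surjective α.coset
  obtain ⟨v, hv⟩ := QuotientGroup.mk_surjective β.coset
  obtain ⟨w, hw, huv⟩ := exists_isChain_prod_eq (u⁻¹ * v)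
  exact reflTransGen_of_isChain a hK w hw u hα hβ hu (by rw [huv, mul_inv_cancel_left, hv])

/-- **Edge-connectedness.** For a non-dihedral `a ∈ ℂⁿ` and `K ≥ 2`, the set
`𝒜_φ(K) = {γ ∈ 𝒜 : |φ(γ)| ≤ K}` is edge-connected. -/
theorem edge_connected (n : ℕ) (hn : 3 ≤ n) (a : Fin n → ℂ) (hnd : ¬ Dihedral n a)
    (K : ℝ) (hK : 2 ≤ K) : EdgeConnected (AK n a K) :=
  edge_connected_general n a K hK

end MarkoffHurwitz
end
end

section
/- Let n ≥ 3 and let F be the Fibonacci function on the set 𝒜 of alternating geodesics of the Cayley tree Δ of Γₙ, relative to the root v₀. For every integer m ≥ 2, the number of γ ∈ 𝒜 with F(γ) = m is at most n·m^{n−2}. -/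
open scoped BigOperators

noncomputable section

namespace MarkoffHurwitz

/-!
Let `k₁ ⋯ k_r` be the labels of the path from the vertex of `γ` nearest to the root down to the
root, through the vertices `u₀, …, u_r`. Unfolding the recursion of `F` along this path gives
`F γ = ∑ₓ α_t x · F [u_t; {x, k_t}]` for every `t ≥ 1`, where `α₁` is the indicator of the pair of
`γ` and `α_{t+1}` arises from `α_t` by giving `k_t` the total weight and clearing `k_{t+1}`.
At the root every `[u_r; {x, k_r}]` has value `1`, so `F γ` is the total of `α_r`; moreover
`α_r k_r = 0` and every entry of `α_r` is smaller than the total.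

The pair `(α_r, k_r)` determines `γ`: the previous label `k_{r-1}` is the strict maximum of `α_r`,
which lets one undo the last step, and the indicator of a pair has no strict maximum, which tells
when to stop. A weight vector with total `m`, vanishing at `k_r` and with entries below `m` is
fixed by `n - 2` of its entries, whence at most `m ^ (n - 2)` choices for each of the `n` labels.
-/

section Lists

variable {α : Type*}

/-- The path to the root from the vertex of a `p`-alternating geodesic nearest to the root. -/
def IsRootPath (p : Sym2 α) (l : List α) : Prop :=
  l.IsChain (· ≠ ·) ∧ ∀ x ∈ l.head?, x ∉ p

lemma IsRootPath.of_append_singleton {p : Sym2 α} {l : List α} {c : α}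
    (h : IsRootPath p (l ++ [c])) :
    IsRootPath p l ∧ l.getLast? ≠ some c ∧ (l = [] → c ∉ p) := by
  obtain ⟨hl, -, hlc⟩ := List.isChain_append.1 h.1
  refine ⟨⟨hl, fun x hx => h.2 x ?_⟩, fun e => hlc c e c rfl rfl, ?_⟩
  · rw [List.head?_append, hx]; rfl
  · rintro rfl; exact h.2 c rfl

variable [DecidableEq α]

def cancelCons (i : α) : List α → List α
  | [] => [i]
  | a :: t => if a = i then t else i :: a :: t

lemma cancelCons_of_head?_ne {i : α} {l : List α} (h : l.head? ≠ some i) :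
    cancelCons i l = i :: l := by
  cases l with
  | nil => rfl
  | cons a t => simp_all [cancelCons]

lemma length_cancelCons_le (i : α) (l : List α) : (cancelCons i l).length ≤ l.length + 1 := by
  cases l with
  | nil => simp [cancelCons]
  | cons a t =>
    rw [cancelCons]
    split_ifs <;> simp only [List.length_cons] <;> omega

lemma isChain_cancelCons (i : α) {l : List α} (hl : l.IsChain (· ≠ ·)) :
    (cancelCons i l).IsChain (· ≠ ·) := by
  cases l with
  | nil => exact List.isChain_singleton i
  | cons a t =>
    by_cases h : a = i
    · simpa [cancelCons, h] using hl.tail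
    · simpa [cancelCons, h, List.isChain_cons_cons, Ne.symm h] using hl

lemma cancelCons_cancelCons (i : α) {l : List α} (hl : l.IsChain (· ≠ ·)) :
    cancelCons i (cancelCons i l) = l := by
  cases l with
  | nil => simp [cancelCons]
  | cons a t =>
    by_cases h : a = i
    · subst h
      simp only [cancelCons, if_true]
      exact cancelCons_of_head?_ne fun ht => by
        cases t <;> simp_all [List.isChain_cons_cons]
    · simp [cancelCons, h]

/-- The part of a path to the root after it leaves the `p`-alternating geodesic. -/
def strip (p : Sym2 α) (l : List α) : List α := l.dropWhile (· ∈ p)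

lemma strip_cons_of_mem {p : Sym2 α} {i : α} (hi : i ∈ p) (l : List α) :
    strip p (i :: l) = strip p l :=
  List.dropWhile_cons_of_pos (by simpa using hi)

lemma strip_eq_self {p : Sym2 α} {l : List α} (h : ∀ x ∈ l.head?, x ∉ p) : strip p l = l := by
  cases l with
  | nil => rfl
  | cons a t => exact List.dropWhile_cons_of_neg (by simpa using h a rfl)

lemma isRootPath_strip (p : Sym2 α) {l : List α} (hl : l.IsChain (· ≠ ·)) :
    IsRootPath p (strip p l) := by
  refine ⟨hl.suffix (List.dropWhile_suffix _), fun x hx => ?_⟩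
  have hne : strip p l ≠ [] := by rintro h; simp [h] at hx
  have := List.head_dropWhile_not (· ∈ p) hne
  rw [List.head?_eq_some_head hne, Option.mem_some_iff] at hx
  simpa [strip, ← hx] using this

lemma strip_cancelCons {p : Sym2 α} {i : α} (hi : i ∈ p) (l : List α) :
    strip p (cancelCons i l) = strip p l := by
  cases l with
  | nil => exact strip_cons_of_mem hi []
  | cons a t =>
    by_cases h : a = i
    · subst h; simp [cancelCons, strip_cons_of_mem hi]
    · simp [cancelCons, h, strip_cons_of_mem hi]

end Lists

section NormalForm

variable {n : ℕ}

def wordProd (l : List (Fin n)) : Gam n := (l.map gen).prod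

@[simp] lemma wordProd_nil : wordProd ([] : List (Fin n)) = 1 := rfl

@[simp] lemma wordProd_cons (i : Fin n) (l : List (Fin n)) :
    wordProd (i :: l) = gen i * wordProd l := List.prod_cons

lemma wordProd_append (l₁ l₂ : List (Fin n)) :
    wordProd (l₁ ++ l₂) = wordProd l₁ * wordProd l₂ := by
  simp [wordProd]

lemma wordProd_reverse (l : List (Fin n)) : wordProd l.reverse = (wordProd l)⁻¹ := by
  induction l with
  | nil => simp
  | cons i t ih => rw [List.reverse_cons, wordProd_append, ih]; simp [gen_inv]

lemma wordProd_surjective : Function.Surjective (wordProd (n := n)) := by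
  intro g
  have hg : g ∈ Subgroup.closure (Set.range (PresentedGroup.of (rels := MHrels n))) := by
    rw [PresentedGroup.closure_range_of]; trivial
  induction hg using Subgroup.closure_induction with
  | mem _ h => obtain ⟨i, rfl⟩ := h; exact ⟨[i], by simp [wordProd, gen]⟩
  | one => exact ⟨[], rfl⟩
  | mul _ _ _ _ ha hb =>
    obtain ⟨la, rfl⟩ := ha
    obtain ⟨lb, rfl⟩ := hb
    exact ⟨la ++ lb, wordProd_append la lb⟩
  | inv _ _ ha =>
    obtain ⟨l, rfl⟩ := ha
    exact ⟨l.reverse, wordProd_reverse l⟩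

lemma wordProd_cancelCons (i : Fin n) (l : List (Fin n)) :
    wordProd (cancelCons i l) = gen i * wordProd l := by
  cases l with
  | nil => simp [cancelCons]
  | cons a t =>
    by_cases h : a = i
    · subst h; simp [cancelCons, ← mul_assoc, gen_mul_self]
    · simp [cancelCons, h]

abbrev ReducedWord (n : ℕ) := {l : List (Fin n) // l.IsChain (· ≠ ·)}

def cancelConsPerm (i : Fin n) : Equiv.Perm (ReducedWord n) :=
  Function.Involutive.toPerm (fun x => ⟨cancelCons i x.1, isChain_cancelCons i x.2⟩)
    fun x => Subtype.ext (cancelCons_cancelCons i x.2)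

def wordAction (n : ℕ) : Gam n →* Equiv.Perm (ReducedWord n) :=
  PresentedGroup.toGroup (f := cancelConsPerm) (by
    rintro r ⟨i, rfl⟩
    rw [map_mul, FreeGroup.lift_apply_of]
    exact Equiv.ext fun x => Subtype.ext (cancelCons_cancelCons i x.2))

lemma wordAction_gen_apply (i : Fin n) (x : ReducedWord n) :
    (wordAction n (gen i) x).1 = cancelCons i x.1 := by
  rw [wordAction, gen, PresentedGroup.toGroup.of]; rfl

lemma wordProd_wordAction (g : Gam n) (x : ReducedWord n) :
    wordProd (wordAction n g x).1 = g * wordProd x.1 := by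
  obtain ⟨l, rfl⟩ := wordProd_surjective g
  induction l with
  | nil => simp
  | cons i t ih =>
    rw [wordProd_cons, map_mul, Equiv.Perm.mul_apply, wordAction_gen_apply,
      wordProd_cancelCons, ih, mul_assoc]

lemma length_wordAction_le (l : List (Fin n)) (x : ReducedWord n) :
    (wordAction n (wordProd l) x).1.length ≤ l.length + x.1.length := by
  induction l with
  | nil => simp
  | cons i t ih =>
    rw [wordProd_cons, map_mul, Equiv.Perm.mul_apply, wordAction_gen_apply, List.length_cons]
    exact (length_cancelCons_le i _).trans (by omega)

/-- The labels of the path from the vertex `g` to the root. -/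
def normalForm (g : Gam n) : List (Fin n) := (wordAction n g⁻¹ ⟨[], List.isChain_nil⟩).1

lemma isChain_normalForm (g : Gam n) : (normalForm g).IsChain (· ≠ ·) :=
  (wordAction n g⁻¹ _).2

lemma wordProd_normalForm (g : Gam n) : wordProd (normalForm g) = g⁻¹ := by
  rw [normalForm, wordProd_wordAction, wordProd_nil, mul_one]

lemma normalForm_wordProd_inv {l : List (Fin n)} (hl : l.IsChain (· ≠ ·)) :
    normalForm (wordProd l)⁻¹ = l := by
  rw [normalForm, inv_inv]
  induction l with
  | nil => simp
  | cons i t ih =>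
    rw [wordProd_cons, map_mul, Equiv.Perm.mul_apply, wordAction_gen_apply, ih hl.tail]
    refine cancelCons_of_head?_ne fun h => ?_
    cases t <;> simp_all [List.isChain_cons_cons]

@[simp] lemma normalForm_one : normalForm (1 : Gam n) = [] := by
  simpa using normalForm_wordProd_inv (List.isChain_nil (R := fun x y : Fin n => x ≠ y))

lemma glen_eq_length_normalForm (g : Gam n) : glen n g = (normalForm g).length := by
  have hmem : (normalForm g).length ∈
      {m | ∃ l : List (Fin n), l.length = m ∧ g = (l.map gen).prod} :=
    ⟨(normalForm g).reverse, by simp, by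
      change g = wordProd _
      rw [wordProd_reverse, wordProd_normalForm, inv_inv]⟩
  refine le_antisymm (Nat.sInf_le hmem) (le_csInf ⟨_, hmem⟩ ?_)
  rintro _ ⟨l, rfl, hg⟩
  change g = wordProd l at hg
  have h : normalForm g = (wordAction n (wordProd l.reverse) ⟨[], List.isChain_nil⟩).1 := by
    rw [normalForm, wordProd_reverse, ← hg]
  simpa [h] using length_wordAction_le l.reverse ⟨[], List.isChain_nil⟩

end NormalForm

section Cosets

variable {n : ℕ}

lemma gen_mem_pairSub {p : Sym2 (Fin n)} {i : Fin n} (hi : i ∈ p) : gen i ∈ pairSub p := by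
  induction p using Sym2.ind with
  | _ a b =>
    rw [pairSub_mk]
    exact Subgroup.subset_closure (by rcases Sym2.mem_iff.1 hi with rfl | rfl <;> simp)

lemma wordProd_mem_pairSub {p : Sym2 (Fin n)} {w : List (Fin n)} (hw : ∀ i ∈ w, i ∈ p) :
    wordProd w ∈ pairSub p := by
  induction w with
  | nil => exact (pairSub p).one_mem
  | cons a t ih =>
    rw [wordProd_cons]
    exact (pairSub p).mul_mem (gen_mem_pairSub (hw a (by simp)))
      (ih fun i hi => hw i (List.mem_cons_of_mem a hi))

lemma strip_wordAction {p : Sym2 (Fin n)} {t : Gam n} (ht : t ∈ pairSub p) (x : ReducedWord n) :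
    strip p (wordAction n t x).1 = strip p x.1 := by
  induction p using Sym2.ind with
  | _ a b =>
    rw [pairSub_mk] at ht
    induction ht using Subgroup.closure_induction generalizing x with
    | mem _ hg =>
      rcases hg with rfl | rfl <;> rw [wordAction_gen_apply] <;>
        exact strip_cancelCons (by simp) _
    | one => rfl
    | mul _ _ _ _ ihg ihh => rw [map_mul, Equiv.Perm.mul_apply, ihg, ihh]
    | inv g _ ih => rw [← ih, ← Equiv.Perm.mul_apply, ← map_mul, mul_inv_cancel, map_one]; rfl

lemma strip_normalForm_eq_of_mk_eq {p : Sym2 (Fin n)} {g h : Gam n}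
    (hgh : (QuotientGroup.mk g : Gam n ⧸ pairSub p) = QuotientGroup.mk h) :
    strip p (normalForm g) = strip p (normalForm h) := by
  have ht := (pairSub p).inv_mem (QuotientGroup.eq.1 hgh)
  rw [normalForm, normalForm, ← strip_wordAction ht, ← Equiv.Perm.mul_apply, ← map_mul]
  congr 4
  group

lemma mk_eq_mk_wordProd_strip (p : Sym2 (Fin n)) (g : Gam n) :
    (QuotientGroup.mk g : Gam n ⧸ pairSub p) =
      QuotientGroup.mk (wordProd (strip p (normalForm g)))⁻¹ := by
  rw [QuotientGroup.eq]
  have hsplit := congrArg wordProd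
    (List.takeWhile_append_dropWhile (p := (· ∈ p)) (l := normalForm g))
  rw [wordProd_append, wordProd_normalForm] at hsplit
  have hw : g⁻¹ * (wordProd (strip p (normalForm g)))⁻¹ =
      wordProd ((normalForm g).takeWhile (· ∈ p)) := by
    rw [← hsplit, strip, mul_inv_cancel_right]
  rw [hw]
  exact wordProd_mem_pairSub fun i hi => by simpa using List.mem_takeWhile_imp hi

lemma mk_wordProd_inv_ne_one {p : Sym2 (Fin n)} {l : List (Fin n)} (hl : IsRootPath p l)
    (hne : l ≠ []) :
    (QuotientGroup.mk (wordProd l)⁻¹ : Gam n ⧸ pairSub p) ≠ QuotientGroup.mk 1 := by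
  intro h
  have := strip_normalForm_eq_of_mk_eq h
  rw [normalForm_wordProd_inv hl.1, strip_eq_self hl.2, normalForm_one] at this
  exact hne this

lemma glen_le_of_mk_eq {p : Sym2 (Fin n)} {l : List (Fin n)} (hl : IsRootPath p l) {h : Gam n}
    (hh : (QuotientGroup.mk h : Gam n ⧸ pairSub p) = QuotientGroup.mk (wordProd l)⁻¹) :
    glen n (wordProd l)⁻¹ ≤ glen n h := by
  have := strip_normalForm_eq_of_mk_eq hh
  rw [normalForm_wordProd_inv hl.1, strip_eq_self hl.2] at this
  rw [glen_eq_length_normalForm, glen_eq_length_normalForm, normalForm_wordProd_inv hl.1, ← this]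
  exact (List.dropWhile_suffix _).length_le

lemma glen_mul_gen_lt {c : Fin n} {r : List (Fin n)} (hl : (c :: r).IsChain (· ≠ ·)) :
    glen n ((wordProd (c :: r))⁻¹ * gen c) < glen n (wordProd (c :: r))⁻¹ := by
  have : (wordProd (c :: r))⁻¹ * gen c = (wordProd r)⁻¹ := by
    rw [wordProd_cons, mul_inv_rev, gen_inv, mul_assoc, gen_mul_self, mul_one]
  rw [this, glen_eq_length_normalForm, glen_eq_length_normalForm, normalForm_wordProd_inv hl,
    normalForm_wordProd_inv (l := r) hl.tail]
  simp

/-- The labels of the path from the vertex of `γ` nearest to the root, to the root. -/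
def rootPath (γ : AltGeo n) : List (Fin n) := strip γ.pair (normalForm γ.coset.out)

lemma isRootPath_rootPath (γ : AltGeo n) : IsRootPath γ.pair (rootPath γ) :=
  isRootPath_strip _ (isChain_normalForm _)

lemma mk_rootPath (γ : AltGeo n) :
    (QuotientGroup.mk (wordProd (rootPath γ))⁻¹ : Gam n ⧸ pairSub γ.pair) = γ.coset := by
  rw [rootPath, ← mk_eq_mk_wordProd_strip]
  exact QuotientGroup.out_eq' γ.coset

lemma AltGeo.ext_rootPath {γ₁ γ₂ : AltGeo n} (hp : γ₁.pair = γ₂.pair)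
    (hl : rootPath γ₁ = rootPath γ₂) : γ₁ = γ₂ := by
  obtain ⟨p, nd, c₁⟩ := γ₁
  obtain ⟨p', nd', c₂⟩ := γ₂
  obtain rfl : p = p' := hp
  have h₁ := mk_rootPath ⟨p, nd, c₁⟩
  rw [hl, mk_rootPath] at h₁
  obtain rfl : c₂ = c₁ := h₁
  rfl

end Cosets

section Weights

variable {ι : Type*}

def StrictMaxAt (α : ι → ℕ) (a : ι) : Prop := ∀ y, y ≠ a → α y < α a

lemma StrictMaxAt.eq {α : ι → ℕ} {a b : ι} (ha : StrictMaxAt α a) (hb : StrictMaxAt α b) :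
    a = b := by
  by_contra h
  exact lt_asymm (ha b (Ne.symm h)) (hb a h)

variable [DecidableEq ι]

def pairIndicator (p : Sym2 ι) : ι → ℕ := fun x => if x ∈ p then 1 else 0

lemma pairIndicator_of_mem {p : Sym2 ι} {x : ι} (hx : x ∈ p) : pairIndicator p x = 1 := if_pos hx

lemma pairIndicator_injective : Function.Injective (pairIndicator (ι := ι)) := by
  intro p q h
  refine Sym2.ext fun x => ?_
  have := congrFun h x
  unfold pairIndicator at this
  split_ifs at this <;> simp_all

lemma not_strictMaxAt_pairIndicator {p : Sym2 ι} (hp : ¬ p.IsDiag) (a : ι) :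
    ¬ StrictMaxAt (pairIndicator p) a := by
  induction p using Sym2.ind with
  | _ i j =>
    have hij : i ≠ j := by rwa [Sym2.mk_isDiag_iff] at hp
    intro h
    have hle : pairIndicator s(i, j) a ≤ 1 := by unfold pairIndicator; split_ifs <;> omega
    by_cases hia : i = a
    · subst hia
      have := h j (Ne.symm hij)
      rw [pairIndicator_of_mem (Sym2.mem_mk_left _ j),
        pairIndicator_of_mem (Sym2.mem_mk_right _ j)] at this
      exact lt_irrefl _ this
    · have := h i hia
      rw [pairIndicator_of_mem (Sym2.mem_mk_left i j)] at this
      omega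

variable [Fintype ι]

def EntriesLtSum (α : ι → ℕ) : Prop := ∀ y, α y < ∑ x, α x

def stepWeights (α : ι → ℕ) (d c : ι) : ι → ℕ :=
  fun x => if x = c then 0 else if x = d then ∑ y, α y else α x

lemma sum_pairIndicator_mul {i j : ι} (hij : i ≠ j) (V : ι → ℕ) :
    ∑ x, pairIndicator s(i, j) x * V x = V i + V j := by
  simp only [pairIndicator, ite_mul, one_mul, zero_mul]
  rw [← Finset.sum_filter, ← Finset.sum_pair hij]
  congr 1
  ext x
  simp

lemma entriesLtSum_pairIndicator {p : Sym2 ι} (hp : ¬ p.IsDiag) :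
    EntriesLtSum (pairIndicator p) := by
  induction p using Sym2.ind with
  | _ i j =>
    have hij : i ≠ j := by rwa [Sym2.mk_isDiag_iff] at hp
    have hsum := sum_pairIndicator_mul hij 1
    simp only [Pi.one_apply, mul_one] at hsum
    intro y
    rw [hsum]
    unfold pairIndicator
    split_ifs <;> omega

section Step

variable {α : ι → ℕ} {d c : ι}

lemma stepWeights_right : stepWeights α d c c = 0 := if_pos rfl

lemma stepWeights_left (hdc : d ≠ c) : stepWeights α d c d = ∑ y, α y := by
  simp [stepWeights, hdc]

lemma stepWeights_of_ne {x : ι} (hxc : x ≠ c) (hxd : x ≠ d) : stepWeights α d c x = α x := by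
  simp [stepWeights, hxc, hxd]

lemma sum_stepWeights (hdc : d ≠ c) (hd : α d = 0) :
    ∑ x, stepWeights α d c x + α c = 2 * ∑ x, α x := by
  have key : ∀ x, stepWeights α d c x + (if x = c then α c else 0) =
      α x + if x = d then ∑ y, α y else 0 := by
    intro x
    by_cases hxc : x = c
    · subst hxc; simp [stepWeights, Ne.symm hdc]
    · by_cases hxd : x = d
      · subst hxd; simp [stepWeights, hdc, hd]
      · simp [stepWeights, hxc, hxd]
  have := Finset.sum_congr rfl fun x (_ : x ∈ Finset.univ) => key x
  simp only [Finset.sum_add_distrib, Finset.sum_ite_eq', Finset.mem_univ, if_true] at this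
  omega

lemma sum_stepWeights_mul (hdc : d ≠ c) (hd : α d = 0) {V : ι → ℕ} (hV : V c = 0) :
    ∑ x, stepWeights α d c x * V x = ∑ x, α x * V x + (∑ x, α x) * V d := by
  have key : ∀ x, stepWeights α d c x * V x =
      α x * V x + if x = d then (∑ y, α y) * V d else 0 := by
    intro x
    by_cases hxc : x = c
    · subst hxc; simp [stepWeights, hV, Ne.symm hdc]
    · by_cases hxd : x = d
      · subst hxd; simp [stepWeights, hdc, hd]
      · simp [stepWeights, hxc, hxd]
  simp only [key, Finset.sum_add_distrib, Finset.sum_ite_eq', Finset.mem_univ, if_true]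

lemma entriesLtSum_stepWeights (h : EntriesLtSum α) (hdc : d ≠ c) (hd : α d = 0) :
    EntriesLtSum (stepWeights α d c) := by
  have hsum := sum_stepWeights hdc hd
  have hc := h c
  intro y
  by_cases hyc : y = c
  · subst hyc; rw [stepWeights_right]; omega
  · by_cases hyd : y = d
    · subst hyd; rw [stepWeights_left hdc]; omega
    · rw [stepWeights_of_ne hyc hyd]; have := h y; omega

lemma strictMaxAt_stepWeights (h : EntriesLtSum α) (hdc : d ≠ c) :
    StrictMaxAt (stepWeights α d c) d := by
  intro y hyd
  rw [stepWeights_left hdc]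
  by_cases hyc : y = c
  · subst hyc; rw [stepWeights_right]; exact (Nat.zero_le _).trans_lt (h d)
  · rw [stepWeights_of_ne hyc hyd]; exact h y

lemma eq_of_stepWeights_eq {α' : ι → ℕ} (hdc : d ≠ c) (hd : α d = 0) (hd' : α' d = 0)
    (h : stepWeights α d c = stepWeights α' d c) : α = α' := by
  have hS : ∑ x, α x = ∑ x, α' x := by
    simpa [stepWeights_left hdc] using congrFun h d
  have hc : α c = α' c := by
    have h₁ := sum_stepWeights hdc hd
    have h₂ := sum_stepWeights hdc hd'
    rw [h] at h₁
    omega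
  funext x
  by_cases hxc : x = c
  · rwa [hxc]
  · by_cases hxd : x = d
    · rw [hxd, hd, hd']
    · simpa [stepWeights_of_ne hxc hxd] using congrFun h x

end Step

/-- The second component is the last label read, `none` before the first step. -/
def stepState : (ι → ℕ) × Option ι → ι → (ι → ℕ) × Option ι
  | (α, none), c => (α, some c)
  | (α, some d), c => (stepWeights α d c, some c)

def pathState (p : Sym2 ι) (l : List ι) : (ι → ℕ) × Option ι :=
  l.foldl stepState (pairIndicator p, none)

def IsValidState : (ι → ℕ) × Option ι → Prop
  | (α, none) => EntriesLtSum α ∧ ∀ a, ¬ StrictMaxAt α a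
  | (α, some d) => EntriesLtSum α ∧ α d = 0

lemma pathState_append_singleton (p : Sym2 ι) (l : List ι) (c : ι) :
    pathState p (l ++ [c]) = stepState (pathState p l) c :=
  List.foldl_concat _ _ _ _

lemma pathState_snd (p : Sym2 ι) (l : List ι) : (pathState p l).2 = l.getLast? := by
  induction l using List.reverseRecOn with
  | nil => rfl
  | append_singleton l c _ =>
    rw [pathState_append_singleton, List.getLast?_concat]
    rcases pathState p l with ⟨α, _ | d⟩ <;> rfl

lemma eq_of_stepState_eq {σ₁ σ₂ : (ι → ℕ) × Option ι} {c : ι} (h₁ : IsValidState σ₁)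
    (h₂ : IsValidState σ₂) (hc₁ : σ₁.2 ≠ some c) (hc₂ : σ₂.2 ≠ some c)
    (h : stepState σ₁ c = stepState σ₂ c) : σ₁ = σ₂ := by
  rcases σ₁ with ⟨α₁, _ | d₁⟩ <;> rcases σ₂ with ⟨α₂, _ | d₂⟩ <;>
    simp only [stepState, Prod.mk.injEq, and_true] at h
  · rw [h]
  · have hd₂ : d₂ ≠ c := fun e => hc₂ (by rw [e])
    exact absurd (h ▸ strictMaxAt_stepWeights h₂.1 hd₂) (h₁.2 d₂)
  · have hd₁ : d₁ ≠ c := fun e => hc₁ (by rw [e])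
    exact absurd (h ▸ strictMaxAt_stepWeights h₁.1 hd₁) (h₂.2 d₁)
  · have hd₁ : d₁ ≠ c := fun e => hc₁ (by rw [e])
    have hd₂ : d₂ ≠ c := fun e => hc₂ (by rw [e])
    obtain rfl : d₁ = d₂ :=
      (strictMaxAt_stepWeights h₁.1 hd₁).eq (h ▸ strictMaxAt_stepWeights h₂.1 hd₂)
    rw [eq_of_stepWeights_eq hd₁ h₁.2 h₂.2 h]

lemma isValidState_pathState {p : Sym2 ι} {l : List ι} (hl : IsRootPath p l)
    (hp : ¬ p.IsDiag) : IsValidState (pathState p l) := by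
  induction l using List.reverseRecOn with
  | nil => exact ⟨entriesLtSum_pairIndicator hp, not_strictMaxAt_pairIndicator hp⟩
  | append_singleton l c ih =>
    obtain ⟨hl', hlast, hnil⟩ := hl.of_append_singleton
    have hv := ih hl'
    have hsnd := pathState_snd p l
    rw [pathState_append_singleton]
    rcases hσ : pathState p l with ⟨α, _ | d⟩ <;> rw [hσ] at hv hsnd
    · obtain rfl : l = [] := List.getLast?_eq_none_iff.1 hsnd.symm
      obtain rfl : α = pairIndicator p := congrArg Prod.fst hσ.symm
      exact ⟨hv.1, if_neg (hnil rfl)⟩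
    · have hdc : d ≠ c := fun e => hlast (by rw [← hsnd, e])
      exact ⟨entriesLtSum_stepWeights hv.1 hdc hv.2, stepWeights_right⟩

lemma eq_of_pathState_eq {p₁ p₂ : Sym2 ι} {l₁ l₂ : List ι} (h₁ : IsRootPath p₁ l₁)
    (h₂ : IsRootPath p₂ l₂) (hp₁ : ¬ p₁.IsDiag) (hp₂ : ¬ p₂.IsDiag)
    (h : pathState p₁ l₁ = pathState p₂ l₂) : l₁ = l₂ ∧ p₁ = p₂ := by
  have hs := congrArg Prod.snd h
  rw [pathState_snd, pathState_snd] at hs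
  induction l₁ using List.reverseRecOn generalizing l₂ with
  | nil =>
    obtain rfl : l₂ = [] := List.getLast?_eq_none_iff.1 hs.symm
    exact ⟨rfl, pairIndicator_injective (congrArg Prod.fst h)⟩
  | append_singleton l₁ c ih =>
    obtain ⟨l₂, rfl⟩ : ∃ l₂', l₂ = l₂' ++ [c] := by
      rcases List.eq_nil_or_concat l₂ with rfl | ⟨l', c', rfl⟩
      · simp at hs
      · rw [List.concat_eq_append, List.getLast?_concat, List.getLast?_concat,
          Option.some_inj] at hs
        exact ⟨l', by rw [List.concat_eq_append, hs]⟩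
    obtain ⟨h₁', hlast₁, -⟩ := h₁.of_append_singleton
    obtain ⟨h₂', hlast₂, -⟩ := h₂.of_append_singleton
    rw [pathState_append_singleton, pathState_append_singleton] at h
    have h' := eq_of_stepState_eq (isValidState_pathState h₁' hp₁)
      (isValidState_pathState h₂' hp₂) (by rwa [pathState_snd]) (by rwa [pathState_snd]) h
    obtain ⟨rfl, rfl⟩ := ih h₁' h₂' h' (by rw [← pathState_snd, h', pathState_snd])
    exact ⟨rfl, rfl⟩

end Weights

section Fibonacci

variable {n : ℕ} {F : AltGeo n → ℕ}

/-- `F` on the `s`-alternating geodesic through `g`, extended by `0` to diagonal `s`. -/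
def valAt (F : AltGeo n → ℕ) (s : Sym2 (Fin n)) (g : Gam n) : ℕ :=
  if h : s.IsDiag then 0 else F ⟨s, h, QuotientGroup.mk g⟩

lemma valAt_diag (x : Fin n) (g : Gam n) : valAt F s(x, x) g = 0 :=
  dif_pos (Sym2.mk_isDiag_iff.2 rfl)

lemma valAt_mul_of_mem {s : Sym2 (Fin n)} (g : Gam n) {t : Gam n} (ht : t ∈ pairSub s) :
    valAt F s (g * t) = valAt F s g := by
  simp only [valAt, QuotientGroup.mk_mul_of_mem g ht]

lemma valAt_rootPath (γ : AltGeo n) : valAt F γ.pair (wordProd (rootPath γ))⁻¹ = F γ := by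
  rw [valAt, dif_neg γ.nd, mk_rootPath]

lemma IsFib.valAt_of_mem (hF : IsFib n F) {s : Sym2 (Fin n)} (hs : ¬ s.IsDiag) {g : Gam n}
    (hg : g ∈ pairSub s) : valAt F s g = 1 := by
  rw [valAt, dif_neg hs]
  exact hF.1 _ (QuotientGroup.eq.2 (by simpa using hg))

lemma IsFib.valAt_eq_add (hF : IsFib n F) {c : Fin n} {r : List (Fin n)}
    (hl : (c :: r).IsChain (· ≠ ·)) {x d : Fin n} (hxd : x ≠ d) (hxc : x ≠ c) (hdc : d ≠ c) :
    valAt F s(x, d) (wordProd (c :: r))⁻¹ =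
      valAt F s(x, c) (wordProd (c :: r))⁻¹ + valAt F s(d, c) (wordProd (c :: r))⁻¹ := by
  have hp : IsRootPath s(x, d) (c :: r) :=
    ⟨hl, fun y hy => by
      obtain rfl : c = y := Option.some_inj.1 hy
      simp [Sym2.mem_iff, hxc.symm, hdc.symm]⟩
  have hnd : ¬ s(x, d).IsDiag := Sym2.mk_isDiag_iff.not.2 hxd
  have := hF.2 ⟨s(x, d), hnd, QuotientGroup.mk (wordProd (c :: r))⁻¹⟩
    (mk_wordProd_inv_ne_one hp (List.cons_ne_nil c r)) _ rfl
    (fun _ => glen_le_of_mk_eq hp) x d c rfl hxc.symm hdc.symm (glen_mul_gen_lt hl)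
  rwa [valAt, valAt, valAt, dif_neg hnd, dif_neg (Sym2.mk_isDiag_iff.not.2 hxc),
    dif_neg (Sym2.mk_isDiag_iff.not.2 hdc)]

lemma IsFib.sum_mul_valAt_eq (hF : IsFib n F) {d : Fin n} {w : List (Fin n)}
    (hl : (d :: w).IsChain (· ≠ ·)) {α : Fin n → ℕ} (hd : α d = 0) :
    ∑ x, α x * valAt F s(x, d) (wordProd (d :: w))⁻¹ =
      ∑ x, (w.foldl stepState (α, some d)).1 x := by
  induction w generalizing d α with
  | nil =>
    refine Finset.sum_congr rfl fun x _ => ?_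
    by_cases hxd : x = d
    · simp [hxd, hd]
    · rw [hF.valAt_of_mem (by simpa [Sym2.mk_isDiag_iff] using hxd)
        ((pairSub _).inv_mem (wordProd_mem_pairSub (by simp))), mul_one]
      rfl
  | cons c r ih =>
    have hdc : d ≠ c := (List.isChain_cons_cons.1 hl).1
    set V := fun x => valAt F s(x, c) (wordProd (c :: r))⁻¹
    have hg : (wordProd (d :: c :: r))⁻¹ = (wordProd (c :: r))⁻¹ * gen d := by
      rw [wordProd_cons, mul_inv_rev, gen_inv]
    have key : ∀ x,
        α x * valAt F s(x, d) (wordProd (d :: c :: r))⁻¹ = α x * V x + α x * V d := by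
      intro x
      rw [hg, valAt_mul_of_mem _ (gen_mem_pairSub (Sym2.mem_mk_right x d)), ← mul_add]
      by_cases hxd : x = d
      · simp [hxd, hd]
      by_cases hxc : x = c
      · subst hxc; simp [V, valAt_diag, Sym2.eq_swap]
      · rw [hF.valAt_eq_add hl.tail hxd hxc hdc]
    rw [Finset.sum_congr rfl fun x _ => key x, Finset.sum_add_distrib, ← Finset.sum_mul,
      ← sum_stepWeights_mul hdc hd (valAt_diag c _)]
    exact ih hl.tail stepWeights_right

lemma IsFib.valAt_eq_sum_pathState (hF : IsFib n F) {p : Sym2 (Fin n)} (hp : ¬ p.IsDiag)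
    {l : List (Fin n)} (hl : IsRootPath p l) (hne : l ≠ []) :
    valAt F p (wordProd l)⁻¹ = ∑ x, (pathState p l).1 x := by
  obtain ⟨k, w, rfl⟩ := List.exists_cons_of_ne_nil hne
  induction p using Sym2.ind with
  | _ i j =>
    have hij : i ≠ j := by rwa [Sym2.mk_isDiag_iff] at hp
    have hk : k ∉ s(i, j) := hl.2 k rfl
    have hik : i ≠ k := fun h => hk (h ▸ Sym2.mem_mk_left i j)
    have hjk : j ≠ k := fun h => hk (h ▸ Sym2.mem_mk_right i j)
    rw [hF.valAt_eq_add hl.1 hij hik hjk,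
      ← sum_pairIndicator_mul hij fun x => valAt F s(x, k) (wordProd (k :: w))⁻¹]
    exact hF.sum_mul_valAt_eq hl.1 (if_neg hk)

lemma IsFib.apply_eq_one_of_rootPath_eq_nil (hF : IsFib n F) {γ : AltGeo n}
    (h : rootPath γ = []) : F γ = 1 :=
  hF.1 γ (by rw [← mk_rootPath, h, wordProd_nil, inv_one])

lemma IsFib.apply_eq_sum_pathState (hF : IsFib n F) {γ : AltGeo n} (h : rootPath γ ≠ []) :
    F γ = ∑ x, (pathState γ.pair (rootPath γ)).1 x := by
  rw [← valAt_rootPath (F := F), hF.valAt_eq_sum_pathState γ.nd (isRootPath_rootPath γ) h]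

end Fibonacci

section Counting

variable {ι : Type*} [Fintype ι] [DecidableEq ι]

def cappedCompositions (e : ι) (m : ℕ) : Set (ι → ℕ) :=
  {α | α e = 0 ∧ ∑ i, α i = m ∧ ∀ i, α i < m}

lemma eq_of_mem_cappedCompositions {e f : ι} {m : ℕ} {α β : ι → ℕ}
    (hα : α ∈ cappedCompositions e m) (hβ : β ∈ cappedCompositions e m)
    (h : ∀ i, i ≠ e → i ≠ f → α i = β i) : α = β := by
  have hoff : ∀ i, i ≠ f → α i = β i := by
    intro i hif
    by_cases hie : i = e
    · rw [hie, hα.1, hβ.1]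
    · exact h i hie hif
  have hrest : ∑ i ∈ Finset.univ.erase f, α i = ∑ i ∈ Finset.univ.erase f, β i :=
    Finset.sum_congr rfl fun i hi => hoff i (Finset.ne_of_mem_erase hi)
  have hαf := Finset.add_sum_erase Finset.univ α (Finset.mem_univ f)
  have hβf := Finset.add_sum_erase Finset.univ β (Finset.mem_univ f)
  have hαm := hα.2.1
  have hβm := hβ.2.1
  funext i
  by_cases hif : i = f
  · subst hif; linarith
  · exact hoff i hif

lemma card_subtype_ne_and_ne {e f : ι} (hfe : f ≠ e) :
    Fintype.card {i // i ≠ e ∧ i ≠ f} = Fintype.card ι - 2 := by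
  have : Finset.univ.filter (fun i => i ≠ e ∧ i ≠ f) = (Finset.univ.erase e).erase f := by
    ext i; simp [and_comm]
  rw [Fintype.card_subtype, this, Finset.card_erase_of_mem (by simp [hfe]),
    Finset.card_erase_of_mem (Finset.mem_univ e), Finset.card_univ]
  omega

/-- Off `e` and one further coordinate `f`, a capped composition is an arbitrary tuple of
residues mod `m`; its value at `f` is then forced by the total. -/
lemma encard_cappedCompositions_le (e : ι) (m : ℕ) :
    (cappedCompositions e m).encard ≤ m ^ (Fintype.card ι - 2) := by
  rcases (cappedCompositions e m).eq_empty_or_nonempty with h | ⟨α₀, hα₀e, hα₀m, hα₀lt⟩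
  · simp [h]
  have hm : 0 < m := (Nat.zero_le _).trans_lt (hα₀lt e)
  obtain ⟨f, -, hf⟩ := Finset.exists_ne_zero_of_sum_ne_zero (s := Finset.univ) (f := α₀)
    (by omega)
  have hfe : f ≠ e := fun h => hf (h ▸ hα₀e)
  let res : (ι → ℕ) → {i // i ≠ e ∧ i ≠ f} → Fin m := fun α i => ⟨α i % m, Nat.mod_lt _ hm⟩
  have hinj : Set.InjOn res (cappedCompositions e m) := fun α hα β hβ h =>
    eq_of_mem_cappedCompositions hα hβ fun i hie hif => by
      have := congrArg Fin.val (congrFun h ⟨i, hie, hif⟩)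
      simpa [res, Nat.mod_eq_of_lt (hα.2.2 i), Nat.mod_eq_of_lt (hβ.2.2 i)] using this
  calc (cappedCompositions e m).encard
      ≤ (Set.univ : Set ({i // i ≠ e ∧ i ≠ f} → Fin m)).encard :=
        Set.encard_le_encard_of_injOn (Set.mapsTo_univ _ _) hinj
    _ = m ^ (Fintype.card ι - 2) := by
        rw [Set.encard_univ, ENat.card_eq_coe_fintype_card, Fintype.card_fun, Fintype.card_fin,
          card_subtype_ne_and_ne hfe]
        push_cast
        rfl

variable {n : ℕ} {F : AltGeo n → ℕ}

def encode (γ : AltGeo n) : (Fin n → ℕ) × Option (Fin n) := pathState γ.pair (rootPath γ)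

lemma encode_injective : Function.Injective (encode (n := n)) := fun γ₁ γ₂ h =>
  have hl := eq_of_pathState_eq (isRootPath_rootPath γ₁) (isRootPath_rootPath γ₂) γ₁.nd γ₂.nd h
  AltGeo.ext_rootPath hl.2 hl.1

lemma IsFib.exists_encode_eq (hF : IsFib n F) {m : ℕ} (hm : 2 ≤ m) {γ : AltGeo n}
    (hγ : F γ = m) : ∃ e, ∃ α ∈ cappedCompositions e m, (α, some e) = encode γ := by
  have hne : rootPath γ ≠ [] := fun h => by
    rw [hF.apply_eq_one_of_rootPath_eq_nil h] at hγ; omega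
  have hsum := hF.apply_eq_sum_pathState hne
  have hvalid := isValidState_pathState (isRootPath_rootPath γ) γ.nd
  have hsnd := pathState_snd γ.pair (rootPath γ)
  rw [List.getLast?_eq_some_getLast hne] at hsnd
  rw [encode]
  rcases hσ : pathState γ.pair (rootPath γ) with ⟨α, _ | e⟩ <;> rw [hσ] at hvalid hsnd hsum
  · simp at hsnd
  · obtain ⟨hlt, he⟩ := hvalid
    exact ⟨e, α, ⟨he, hsum ▸ hγ, fun i => hγ ▸ hsum ▸ hlt i⟩, rfl⟩

end Counting

theorem fibonacci_multiplicity_general (n : ℕ) (F : AltGeo n → ℕ) (hF : IsFib n F)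
    (m : ℕ) (hm : 2 ≤ m) :
    {γ : AltGeo n | F γ = m}.Finite ∧
    {γ : AltGeo n | F γ = m}.ncard ≤ n * m ^ (n - 2) := by
  have hmaps : Set.MapsTo encode {γ : AltGeo n | F γ = m}
      (⋃ e, (fun α => (α, some e)) '' cappedCompositions e m) := fun γ hγ => by
    obtain ⟨e, α, hα, h⟩ := hF.exists_encode_eq hm hγ
    exact Set.mem_iUnion.2 ⟨e, α, hα, h⟩
  have hcard : {γ : AltGeo n | F γ = m}.encard ≤ (n * m ^ (n - 2) : ℕ) :=
    calc {γ : AltGeo n | F γ = m}.encard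
        ≤ (⋃ e, (fun α => (α, some e)) '' cappedCompositions e m).encard :=
          Set.encard_le_encard_of_injOn hmaps encode_injective.injOn
      _ ≤ ∑ e, ((fun α => (α, some e)) '' cappedCompositions e m).encard :=
          Set.encard_iUnion_le_of_fintype _
      _ ≤ ∑ _e : Fin n, (m ^ (n - 2) : ℕ∞) := Finset.sum_le_sum fun e _ => by
          rw [(Prod.mk_left_injective _).encard_image]
          simpa using encard_cappedCompositions_le e m
      _ = (n * m ^ (n - 2) : ℕ) := by simp
  have hfin := Set.finite_of_encard_le_coe hcard
  exact ⟨hfin, Nat.cast_le.1 (hfin.cast_ncard_eq ▸ hcard)⟩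

/-- For `m ≥ 2`, the Fibonacci function takes the value `m` at most `n·m^{n−2}` times. -/
theorem fibonacci_multiplicity (n : ℕ) (hn : 3 ≤ n) (F : AltGeo n → ℕ) (hF : IsFib n F)
    (m : ℕ) (hm : 2 ≤ m) :
    {γ : AltGeo n | F γ = m}.Finite ∧
    {γ : AltGeo n | F γ = m}.ncard ≤ n * m ^ (n - 2) :=
  fibonacci_multiplicity_general n F hF m hm

end MarkoffHurwitz
end
end

section
/- Let μ, σ, x ∈ ℂ and let λ ∈ ℂ be a root of λ² − xλ + 1 = 0 with |λ| ≥ 1 (so λ + λ⁻¹ = x). Let (yₘ)_{m∈ℤ} be a sequence of complex numbers satisfying y_{m−1} + y_{m+1} = x·yₘ and yₘ² + y_{m+1}² + σ = x·yₘ·y_{m+1} + μ for all m ∈ ℤ. Then: (1) if σ = μ, then yₘ = y₀λᵐ for all m or yₘ = y₀λ^{−m} for all m; (2) if x ∉ [−2,2] and σ ≠ μ, then |yₘ| grows exponentially as |m| → ∞, i.e. there exist constants c > 1 and C > 0 with |yₘ| ≥ C·c^{|m|} for all sufficiently large |m|; (3) if x ∈ (−2,2), then the sequence (|yₘ|) is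 bounded; (4) if x = 2, then there exists w ∈ ℂ with w² = μ − σ and yₘ = y₀ + m·w for all m; (5) if x = −2, then there exists w ∈ ℂ with w² = μ − σ and yₘ = (−1)ᵐ(y₀ + m·w) for all m. -/
/-!
The edge relation is a linear recurrence whose characteristic roots are `l` and `l⁻¹`. If
`l⁻¹ ≠ l`, then `y m = A * l ^ m + B * l ^ (-m)`, and the vertex relation at `m = 0` reads
`A * B * (l - l⁻¹) ^ 2 = σ - μ`. If `l = ±1` (that is, `x = ±2`), then `y m = l ^ m * (y 0 + m * w)`
and the vertex relation reads `w ^ 2 = μ - σ`. So for `σ = μ` one of the two terms vanishes. When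
`x ∉ [-2, 2]` we have `‖l‖ > 1`, both terms are present and the larger one dominates. When
`x ∈ (-2, 2)` the root `l` lies on the unit circle, so both terms stay bounded.
-/

theorem sq_eq_one_of_inv_eq_self {G₀ : Type*} [GroupWithZero G₀] {a : G₀} (ha : a ≠ 0)
    (h : a⁻¹ = a) : a ^ 2 = 1 := by
  rw [sq]
  nth_rewrite 2 [← h]
  exact mul_inv_cancel₀ ha

theorem add_inv_mem_Icc_of_norm_eq_one {l : ℂ} (hl : ‖l‖ = 1) :
    l + l⁻¹ ∈ (fun r : ℝ => (r : ℂ)) '' Set.Icc (-2 : ℝ) 2 := by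
  have hre : |l.re| ≤ 1 := hl ▸ Complex.abs_re_le_norm l
  rw [abs_le] at hre
  exact ⟨2 * l.re, ⟨by linarith, by linarith⟩, by rw [Complex.inv_eq_conj hl, Complex.add_conj]⟩

/-- `Im (l + l⁻¹) = Im l * (1 - 1 / ‖l‖²)`, and a real `t ≠ 0` has `|t + t⁻¹| ≥ 2`. -/
theorem norm_eq_one_of_add_inv_eq_ofReal {l : ℂ} {r : ℝ} (hl : l ≠ 0) (hr₁ : -2 < r)
    (hr₂ : r < 2) (h : l + l⁻¹ = r) : ‖l‖ = 1 := by
  have him : l.im * (1 - (Complex.normSq l)⁻¹) = 0 := by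
    have := congrArg Complex.im h
    simp only [Complex.add_im, Complex.inv_im, Complex.ofReal_im] at this
    linear_combination this
  rcases mul_eq_zero.mp him with hreal | hnorm
  · exfalso
    set t := l.re
    have ht : t + t⁻¹ = r := by
      rw [← Complex.re_add_im l, hreal] at h
      exact_mod_cast (by simpa using h : ((t + t⁻¹ : ℝ) : ℂ) = r)
    have ht0 : t ≠ 0 := fun h0 => hl (Complex.ext h0 hreal)
    have hquad : t ^ 2 - r * t + 1 = 0 := by field_simp at ht; linear_combination ht
    nlinarith [sq_nonneg (2 * t - r)]
  · rw [Complex.norm_def, inv_eq_one.mp (sub_eq_zero.mp hnorm).symm, Real.sqrt_one]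

theorem le_norm_mul_zpow_add_mul_zpow_neg {A B l : ℂ} {C : ℝ} {n : ℤ} (hl : 1 ≤ ‖l‖)
    (hn : 0 ≤ n) (hA : 2 * C ≤ ‖A‖) (hB : ‖B‖ ≤ C * ‖l‖ ^ n) :
    C * ‖l‖ ^ n ≤ ‖A * l ^ n + B * l ^ (-n)‖ := by
  have hAn : 2 * C * ‖l‖ ^ n ≤ ‖A * l ^ n‖ := by
    rw [norm_mul, norm_zpow]
    exact mul_le_mul_of_nonneg_right hA (by positivity)
  have hBn : ‖B * l ^ (-n)‖ ≤ ‖B‖ := by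
    rw [norm_mul, norm_zpow]
    exact mul_le_of_le_one_right (norm_nonneg B) (zpow_le_one_of_nonpos₀ hl (neg_nonpos.2 hn))
  linarith [norm_sub_le_norm_add (A * l ^ n) (B * l ^ (-n))]

theorem exists_exp_lower_bound_mul_zpow_add_mul_zpow_neg {A B l : ℂ} (hA : A ≠ 0) (hB : B ≠ 0)
    (hl : 1 < ‖l‖) :
    ∃ c : ℝ, 1 < c ∧ ∃ C : ℝ, 0 < C ∧ ∃ M : ℕ, ∀ m : ℤ, (M : ℤ) ≤ |m| →
      C * c ^ |m| ≤ ‖A * l ^ m + B * l ^ (-m)‖ := by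
  set C := min ‖A‖ ‖B‖ / 2 with hC_def
  have hC : 0 < C := half_pos (lt_min (norm_pos_iff.2 hA) (norm_pos_iff.2 hB))
  have hCA : 2 * C ≤ ‖A‖ := by linarith [min_le_left ‖A‖ ‖B‖, hC_def]
  have hCB : 2 * C ≤ ‖B‖ := by linarith [min_le_right ‖A‖ ‖B‖, hC_def]
  obtain ⟨M, hM⟩ := pow_unbounded_of_one_lt ((‖A‖ + ‖B‖) / C) hl
  refine ⟨‖l‖, hl, C, hC, M, fun m hm => ?_⟩
  have hsum : ‖A‖ + ‖B‖ ≤ C * ‖l‖ ^ |m| := by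
    rw [← div_le_iff₀' hC]
    calc (‖A‖ + ‖B‖) / C ≤ ‖l‖ ^ (M : ℤ) := by rw [zpow_natCast]; exact hM.le
      _ ≤ ‖l‖ ^ |m| := zpow_le_zpow_right₀ hl.le hm
  rcases abs_choice m with h | h
  · rw [h] at hsum ⊢
    exact le_norm_mul_zpow_add_mul_zpow_neg hl.le (h ▸ abs_nonneg m) hCA
      (by linarith [norm_nonneg A])
  · rw [h] at hsum ⊢
    rw [add_comm, ← neg_neg m, neg_neg (-m)]
    exact le_norm_mul_zpow_add_mul_zpow_neg hl.le (h ▸ abs_nonneg m) hCB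
      (by linarith [norm_nonneg B])

theorem mul_mul_sub_inv_sq_eq_of_eq_geometric {x l A B σ μ : ℂ} {y : ℤ → ℂ} (hl0 : l ≠ 0)
    (hx : x = l + l⁻¹) (hy : ∀ m : ℤ, y m = A * l ^ m + B * l ^ (-m))
    (hv : y 0 ^ 2 + y 1 ^ 2 + σ = x * y 0 * y 1 + μ) : A * B * (l - l⁻¹) ^ 2 = σ - μ := by
  have h0 : y 0 = A + B := by simpa using hy 0
  have h1 : y 1 = A * l + B * l⁻¹ := by simpa using hy 1
  rw [h0, h1, hx] at hv
  linear_combination -hv - (A + B) ^ 2 * mul_inv_cancel₀ hl0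

def SatisfiesEdgeRelation (x : ℂ) (y : ℤ → ℂ) : Prop :=
  ∀ m : ℤ, y (m - 1) + y (m + 1) = x * y m

namespace SatisfiesEdgeRelation

variable {x l : ℂ} {y z : ℤ → ℂ}

theorem eq_of_eq_zero_of_eq_one (hy : SatisfiesEdgeRelation x y)
    (hz : SatisfiesEdgeRelation x z) (h0 : y 0 = z 0) (h1 : y 1 = z 1) : y = z := by
  have consecutive : ∀ m : ℤ, y m = z m ∧ y (m + 1) = z (m + 1) := by
    intro m
    induction m using Int.induction_on with
    | zero => exact ⟨h0, by simpa using h1⟩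
    | succ n ih =>
      refine ⟨ih.2, ?_⟩
      have hyn := hy (n + 1)
      have hzn := hz (n + 1)
      rw [add_sub_cancel_right] at hyn hzn
      linear_combination hyn - hzn - ih.1 + x * ih.2
    | pred n ih =>
      refine ⟨?_, by simpa using ih.1⟩
      have hyn := hy (-n)
      have hzn := hz (-n)
      linear_combination hyn - hzn - ih.2 + x * ih.1
  exact funext fun m => (consecutive m).1

theorem geometric (hl : l ≠ 0) (hx : x = l + l⁻¹) (A B : ℂ) :
    SatisfiesEdgeRelation x fun m => A * l ^ m + B * l ^ (-m) := by
  intro m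
  beta_reduce
  rw [neg_sub', sub_neg_eq_add, neg_add', zpow_sub_one₀ hl, zpow_add_one₀ hl,
    zpow_add_one₀ hl, zpow_sub_one₀ hl, hx]
  ring

theorem zpow_mul_linear (hl : l ^ 2 = 1) (hx : x = 2 * l) (a b : ℂ) :
    SatisfiesEdgeRelation x fun m => l ^ m * (a + m * b) := by
  have hl0 : l ≠ 0 := by rintro rfl; norm_num at hl
  have hinv : l⁻¹ = l := inv_eq_of_mul_eq_one_right (by rw [← sq, hl])
  intro m
  beta_reduce
  rw [zpow_sub_one₀ hl0, zpow_add_one₀ hl0, hinv, hx]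
  push_cast
  ring

theorem exists_zpow_mul_linear {σ μ : ℂ} (hy : SatisfiesEdgeRelation x y) (hl : l ^ 2 = 1)
    (hx : x = 2 * l) (hv : y 0 ^ 2 + y 1 ^ 2 + σ = x * y 0 * y 1 + μ) :
    ∃ w : ℂ, w ^ 2 = μ - σ ∧ ∀ m : ℤ, y m = l ^ m * (y 0 + m * w) := by
  refine ⟨l * y 1 - y 0, ?_, fun m => ?_⟩
  · rw [hx] at hv
    linear_combination hv + y 1 ^ 2 * hl
  · exact congrFun (hy.eq_of_eq_zero_of_eq_one (zpow_mul_linear hl hx (y 0) (l * y 1 - y 0))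
      (by simp) (by simp [← mul_assoc, ← sq, hl])) m

theorem exists_eq_geometric (hy : SatisfiesEdgeRelation x y) (hl : l⁻¹ ≠ l)
    (hx : x = l + l⁻¹) : ∃ A B : ℂ, ∀ m : ℤ, y m = A * l ^ m + B * l ^ (-m) := by
  have hl0 : l ≠ 0 := by rintro rfl; exact hl inv_zero
  have hd : l - l⁻¹ ≠ 0 := sub_ne_zero.2 (Ne.symm hl)
  set A := (y 1 - y 0 * l⁻¹) / (l - l⁻¹)
  set B := (y 0 * l - y 1) / (l - l⁻¹)
  have h0 : y 0 = A + B := by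
    rw [← add_div, eq_div_iff hd]
    ring
  have h1 : y 1 = A * l + B * l⁻¹ := by
    rw [div_mul_eq_mul_div, div_mul_eq_mul_div, ← add_div, eq_div_iff hd]
    ring
  exact ⟨A, B, congrFun (hy.eq_of_eq_zero_of_eq_one (geometric hl0 hx A B) (by simp [h0])
    (by simp [h1]))⟩

theorem eq_zpow_or_eq_zpow_neg (hy : SatisfiesEdgeRelation x y) (hl0 : l ≠ 0)
    (hx : x = l + l⁻¹) (hv : y 0 ^ 2 + y 1 ^ 2 = x * y 0 * y 1) :
    (∀ m : ℤ, y m = y 0 * l ^ m) ∨ (∀ m : ℤ, y m = y 0 * l ^ (-m)) := by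
  have hv' : y 0 ^ 2 + y 1 ^ 2 + 0 = x * y 0 * y 1 + 0 := by simpa using hv
  by_cases hl : l⁻¹ = l
  · obtain ⟨w, hw, hyw⟩ := hy.exists_zpow_mul_linear (sq_eq_one_of_inv_eq_self hl0 hl)
      (by rw [hx, hl, two_mul]) hv'
    have hw0 : w = 0 := pow_eq_zero_iff two_ne_zero |>.mp (by simpa using hw)
    left
    intro m
    rw [hyw m, hw0]
    ring
  · obtain ⟨A, B, hyAB⟩ := hy.exists_eq_geometric hl hx
    have hAB : A * B = 0 := by
      simpa [sub_eq_zero, Ne.symm hl] using mul_mul_sub_inv_sq_eq_of_eq_geometric hl0 hx hyAB hv'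
    have hy0 : y 0 = A + B := by simpa using hyAB 0
    rcases mul_eq_zero.mp hAB with rfl | rfl
    · right
      intro m
      simp [hyAB m, hy0]
    · left
      intro m
      simp [hyAB m, hy0]

theorem exists_exp_lower_bound {σ μ : ℂ} (hy : SatisfiesEdgeRelation x y) (hl : 1 ≤ ‖l‖)
    (hx : x = l + l⁻¹) (hxI : x ∉ (fun r : ℝ => (r : ℂ)) '' Set.Icc (-2 : ℝ) 2) (hσ : σ ≠ μ)
    (hv : y 0 ^ 2 + y 1 ^ 2 + σ = x * y 0 * y 1 + μ) :
    ∃ c : ℝ, 1 < c ∧ ∃ C : ℝ, 0 < C ∧ ∃ M : ℕ, ∀ m : ℤ, (M : ℤ) ≤ |m| →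
      C * c ^ |m| ≤ ‖y m‖ := by
  have hl1 : 1 < ‖l‖ :=
    lt_of_le_of_ne hl fun h => hxI (hx ▸ add_inv_mem_Icc_of_norm_eq_one h.symm)
  have hl0 : l ≠ 0 := norm_pos_iff.1 (one_pos.trans hl1)
  have hd : l⁻¹ ≠ l := by
    intro h
    have := congrArg norm h
    rw [norm_inv] at this
    linarith [inv_lt_one_of_one_lt₀ hl1]
  obtain ⟨A, B, hyAB⟩ := hy.exists_eq_geometric hd hx
  have hAB : A * B ≠ 0 := by
    intro h
    apply hσ
    have := mul_mul_sub_inv_sq_eq_of_eq_geometric hl0 hx hyAB hv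
    rw [h, zero_mul] at this
    exact sub_eq_zero.1 this.symm
  simpa only [← hyAB] using
    exists_exp_lower_bound_mul_zpow_add_mul_zpow_neg (left_ne_zero_of_mul hAB)
      (right_ne_zero_of_mul hAB) hl1

theorem exists_forall_norm_le (hy : SatisfiesEdgeRelation x y) (hl0 : l ≠ 0)
    (hx : x = l + l⁻¹) {r : ℝ} (hr₁ : -2 < r) (hr₂ : r < 2) (hxr : x = r) :
    ∃ B : ℝ, ∀ m : ℤ, ‖y m‖ ≤ B := by
  have hl1 : ‖l‖ = 1 := norm_eq_one_of_add_inv_eq_ofReal hl0 hr₁ hr₂ (hx ▸ hxr)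
  have hd : l⁻¹ ≠ l := by
    intro h
    have hr : ((r ^ 2 : ℝ) : ℂ) = 4 := by
      rw [Complex.ofReal_pow, ← hxr, hx, h]
      linear_combination 4 * sq_eq_one_of_inv_eq_self hl0 h
    have hr' : r ^ 2 = 4 := by exact_mod_cast hr
    nlinarith
  obtain ⟨A, B, hyAB⟩ := hy.exists_eq_geometric hd hx
  refine ⟨‖A‖ + ‖B‖, fun m => ?_⟩
  calc ‖y m‖ ≤ ‖A * l ^ m‖ + ‖B * l ^ (-m)‖ := hyAB m ▸ norm_add_le _ _
    _ = ‖A‖ + ‖B‖ := by simp [hl1]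

end SatisfiesEdgeRelation

/-- Growth of the values of a `μ`-Hurwitz map along an alternating geodesic.
`x = φ(γ)` is the extended Hurwitz value and `σ = σ(γ)` the square sum weight;
`(yₘ)` satisfies the edge relations `y_{m−1} + y_{m+1} = x·yₘ` and the vertex relations
`yₘ² + y_{m+1}² + σ = x·yₘ·y_{m+1} + μ`, and `l` is a root of `l² − x·l + 1 = 0` with `|l| ≥ 1`. -/
theorem growth_along_geodesic (μ σ x : ℂ) (l : ℂ)
    (hroot : l ^ 2 - x * l + 1 = 0) (hl : 1 ≤ ‖l‖)
    (y : ℤ → ℂ)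
    (hrec : ∀ m : ℤ, y (m - 1) + y (m + 1) = x * y m)
    (hvert : ∀ m : ℤ, y m ^ 2 + y (m + 1) ^ 2 + σ = x * y m * y (m + 1) + μ) :
    -- (1)
    (σ = μ → (∀ m : ℤ, y m = y 0 * l ^ m) ∨ (∀ m : ℤ, y m = y 0 * l ^ (-m))) ∧
    -- (2)
    ((x ∉ (fun r : ℝ => (r : ℂ)) '' Set.Icc (-2 : ℝ) 2) → σ ≠ μ →
      ∃ c : ℝ, 1 < c ∧ ∃ C : ℝ, 0 < C ∧ ∃ M : ℕ, ∀ m : ℤ, (M : ℤ) ≤ |m| →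
        C * c ^ |m| ≤ ‖y m‖) ∧
    -- (3)
    ((∃ r : ℝ, -2 < r ∧ r < 2 ∧ x = (r : ℂ)) → ∃ B : ℝ, ∀ m : ℤ, ‖y m‖ ≤ B) ∧
    -- (4)
    (x = 2 → ∃ w : ℂ, w ^ 2 = μ - σ ∧ ∀ m : ℤ, y m = y 0 + (m : ℂ) * w) ∧
    -- (5)
    (x = -2 → ∃ w : ℂ, w ^ 2 = μ - σ ∧ ∀ m : ℤ, y m = (-1) ^ m * (y 0 + (m : ℂ) * w)) := by
  have hy : SatisfiesEdgeRelation x y := hrec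
  have hl0 : l ≠ 0 := by rintro rfl; norm_num at hroot
  have hx : x = l + l⁻¹ := by field_simp; linear_combination -hroot
  have hv : y 0 ^ 2 + y 1 ^ 2 + σ = x * y 0 * y 1 + μ := by simpa only [zero_add] using hvert 0
  refine ⟨fun hσ => ?_, fun hxI hσ => hy.exists_exp_lower_bound hl hx hxI hσ hv,
    fun ⟨r, hr₁, hr₂, hxr⟩ => hy.exists_forall_norm_le hl0 hx hr₁ hr₂ hxr,
    fun hx2 => ?_, fun hx2 => ?_⟩
  · rw [hσ] at hv
    exact hy.eq_zpow_or_eq_zpow_neg hl0 hx (add_right_cancel hv)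
  · simpa using hy.exists_zpow_mul_linear (one_pow 2) (by rw [hx2, mul_one]) hv
  · exact hy.exists_zpow_mul_linear (by norm_num) (by rw [hx2]; norm_num) hv
end

section
/- Let n ≥ 3, μ ∈ ℂ, and (x₁,…,x_{n−2}) ∈ ℂ^{n−2} with x := ∏_{i=1}^{n−2} xᵢ ∉ [−2,2] and σ := ∑_{i=1}^{n−2} xᵢ² ≠ μ. Let λ be the root of λ² − xλ + 1 = 0 with |λ| > 1, and set H_μ(x₁,…,x_{n−2}) = √(|σ − μ|/|x² − 4|) · 2|λ|²/(|λ| − 1). Let (yₘ)_{m∈ℤ} be a sequence of complex numbers with y_{m−1} + y_{m+1} = x·yₘ and μ = σ + yₘ² + y_{m+1}² − x·yₘ·y_{m+1} for all m ∈ ℤ. Then there exist integers m₁ < m₂ such that |yₘ| ≤ H_μ(x₁,…,x_{n−2}) holds exactly when m₁ ≤ m ≤ m₂; moreover |yₘ| is strictly decreasing for integers m ≤ m₁ and strictly increasing for integers m ≥ m₂. -/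
/-! The recurrence has characteristic roots `l` and `l⁻¹`, so `y m = A lᵐ + B l⁻ᵐ`, and the
vertex relation at `m = 0` reads `σ - μ = A B (l - l⁻¹)² = A B (x² - 4)`; thus
`Hμ = √(|A| |B|) · K` with `K = 2|l|²/(|l| - 1)`. With `sₘ = √(|A|/|B|) |l|ᵐ` the triangle
inequality traps `|yₘ| / √(|A| |B|)` between `|sₘ - sₘ⁻¹|` and `sₘ + sₘ⁻¹`. If `|yₘ| > Hμ`, one of
`sₘ`, `sₘ⁻¹` exceeds `K - 1`, and then the dominant term outgrows the other one at every step,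
so `|y|` increases strictly from `m` on in that direction. Hence the sublevel set `|yₘ| ≤ Hμ` is
an interval, outside which `|y|` is strictly monotone; it contains the two indices where `sₘ`
crosses `1`, and it is bounded because `|sₘ - sₘ⁻¹| → ∞` as `m → ±∞`. -/

open Set

theorem exists_sublevel_Icc_of_strictMonoOn_or_strictAntiOn {α : Type*} [LinearOrder α]
    {P : ℤ → α} {H : α} {n : ℤ}
    (hn : P n ≤ H) (hn' : P (n + 1) ≤ H)
    (hbddA : BddAbove {m | P m ≤ H}) (hbddB : BddBelow {m | P m ≤ H})
    (hesc : ∀ m, H < P m → StrictMonoOn P (Ici m) ∨ StrictAntiOn P (Iic m)) :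
    ∃ m₁ m₂ : ℤ, m₁ < m₂ ∧
      (∀ m : ℤ, P m ≤ H ↔ m₁ ≤ m ∧ m ≤ m₂) ∧
      (∀ m m' : ℤ, m < m' → m' ≤ m₁ → P m' < P m) ∧
      (∀ m m' : ℤ, m₂ ≤ m → m < m' → P m < P m') := by
  obtain ⟨m₁, hm₁, hle₁⟩ := Int.exists_least_of_bdd
    (let ⟨b, hb⟩ := hbddB; ⟨b, fun _ h => hb h⟩) ⟨n, hn⟩
  obtain ⟨m₂, hm₂, hle₂⟩ := Int.exists_greatest_of_bdd
    (let ⟨b, hb⟩ := hbddA; ⟨b, fun _ h => hb h⟩) ⟨n, hn⟩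
  have hout₁ : ∀ m, m < m₁ → H < P m := fun m hm => lt_of_not_ge fun h => (hle₁ m h).not_gt hm
  have hout₂ : ∀ m, m₂ < m → H < P m := fun m hm => lt_of_not_ge fun h => (hle₂ m h).not_gt hm
  refine ⟨m₁, m₂, (hle₁ n hn).trans_lt (Int.lt_of_add_one_le (hle₂ _ hn')),
    fun m => ⟨fun h => ⟨hle₁ m h, hle₂ m h⟩, ?_⟩, ?_, ?_⟩
  · rintro ⟨h₁, h₂⟩
    by_contra! h
    rcases hesc m h with hmono | hanti
    · exact (h.trans_le (hmono.monotoneOn self_mem_Ici h₂ h₂)).not_ge hm₂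
    · exact (h.trans_le (hanti.antitoneOn h₁ self_mem_Iic h₁)).not_ge hm₁
  · have hanti : StrictAntiOn P (Iic (m₁ - 1)) := by
      refine (hesc _ (hout₁ _ (sub_one_lt m₁))).resolve_left fun hmono => ?_
      exact (hout₁ _ (sub_one_lt m₁)).not_ge
        ((hmono self_mem_Ici (by simp) (sub_one_lt m₁)).le.trans hm₁)
    intro m m' hmm' hm'
    rcases hm'.eq_or_lt with rfl | hlt
    · exact hm₁.trans_lt (hout₁ m hmm')
    · exact hanti (Int.le_sub_one_of_lt (hmm'.trans hlt)) (Int.le_sub_one_of_lt hlt) hmm'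
  · have hmono : StrictMonoOn P (Ici (m₂ + 1)) := by
      refine (hesc _ (hout₂ _ (lt_add_one m₂))).resolve_right fun hanti => ?_
      exact (hout₂ _ (lt_add_one m₂)).not_ge
        ((hanti (by simp) self_mem_Iic (lt_add_one m₂)).le.trans hm₂)
    intro m m' hm hmm'
    rcases hm.eq_or_lt with rfl | hlt
    · exact hm₂.trans_lt (hout₂ m' hmm')
    · exact hmono (Int.add_one_le_of_lt hlt) (Int.add_one_le_of_lt (hlt.trans hmm')) hmm'

theorem add_inv_lt_mul_sub_inv {r t : ℝ} (hr : 1 < r) (ht : 2 * r ^ 2 / (r - 1) - 1 < t) :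
    t + t⁻¹ < r * t - (r * t)⁻¹ := by
  have hr1 : 0 < r - 1 := sub_pos.mpr hr
  have hK : (r - 1) * (2 * r ^ 2 / (r - 1) - 1) = 2 * r ^ 2 - r + 1 := by
    field_simp; ring
  have hlarge : 2 < (r - 1) * t := by
    nlinarith [mul_lt_mul_of_pos_left ht hr1]
  have ht1 : 1 < t := by nlinarith
  have hinv : t⁻¹ < 1 := inv_lt_one_of_one_lt₀ ht1
  have hinv' : (r * t)⁻¹ < 1 := inv_lt_one_of_one_lt₀ (by nlinarith)
  nlinarith

def GeomSandwich (a c r : ℝ) (P : ℤ → ℝ) : Prop :=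
  ∀ m : ℤ, a * |c * r ^ m - (c * r ^ m)⁻¹| ≤ P m ∧ P m ≤ a * (c * r ^ m + (c * r ^ m)⁻¹)

namespace GeomSandwich

variable {a c r : ℝ} {P : ℤ → ℝ}

theorem of_two_terms {α β : ℝ} (hα : 0 < α) (hβ : 0 < β)
    (hP : ∀ m : ℤ, |α * r ^ m - β * (r ^ m)⁻¹| ≤ P m ∧ P m ≤ α * r ^ m + β * (r ^ m)⁻¹) :
    GeomSandwich √(α * β) √(α / β) r P := by
  have hA : √(α * β) * √(α / β) = α := by
    rw [← Real.sqrt_mul (by positivity), show α * β * (α / β) = α ^ 2 by field_simp,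
      Real.sqrt_sq hα.le]
  have hB : √(α * β) * (√(α / β))⁻¹ = β := by
    rw [← Real.sqrt_inv, ← Real.sqrt_mul (by positivity),
      show α * β * (α / β)⁻¹ = β ^ 2 by field_simp, Real.sqrt_sq hβ.le]
  intro m
  have ha : 0 ≤ √(α * β) := Real.sqrt_nonneg _
  rw [← abs_of_nonneg ha, ← abs_mul, abs_of_nonneg ha, mul_sub, mul_add, mul_inv, ← mul_assoc,
    ← mul_assoc, hA, hB]
  exact hP m

theorem comp_neg (hP : GeomSandwich a c r P) : GeomSandwich a c⁻¹ r (fun m => P (-m)) := by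
  intro m
  have e : c⁻¹ * r ^ m = (c * r ^ (-m))⁻¹ := by rw [zpow_neg, mul_inv, inv_inv]
  rw [e, inv_inv, abs_sub_comm, add_comm]
  exact hP (-m)

theorem strictMonoOn_Ici (hP : GeomSandwich a c r P) (ha : 0 < a) (hc : 0 < c) (hr : 1 < r)
    {m : ℤ} (hm : 2 * r ^ 2 / (r - 1) - 1 < c * r ^ m) : StrictMonoOn P (Ici m) := by
  refine strictMonoOn_of_lt_add_one ordConnected_Ici fun k _ hk _ => ?_
  have ht : 2 * r ^ 2 / (r - 1) - 1 < c * r ^ k :=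
    hm.trans_le (mul_le_mul_of_nonneg_left (zpow_le_zpow_right₀ hr.le hk) hc.le)
  have e : c * r ^ (k + 1) = r * (c * r ^ k) := by
    rw [zpow_add_one₀ (by positivity)]; ring
  calc P k ≤ a * (c * r ^ k + (c * r ^ k)⁻¹) := (hP k).2
    _ < a * (r * (c * r ^ k) - (r * (c * r ^ k))⁻¹) :=
      mul_lt_mul_of_pos_left (add_inv_lt_mul_sub_inv hr ht) ha
    _ ≤ a * |c * r ^ (k + 1) - (c * r ^ (k + 1))⁻¹| := by
      rw [e]; exact mul_le_mul_of_nonneg_left (le_abs_self _) ha.le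
    _ ≤ P (k + 1) := (hP (k + 1)).1

theorem strictAntiOn_Iic (hP : GeomSandwich a c r P) (ha : 0 < a) (hc : 0 < c) (hr : 1 < r)
    {m : ℤ} (hm : 2 * r ^ 2 / (r - 1) - 1 < (c * r ^ m)⁻¹) : StrictAntiOn P (Iic m) := by
  have e : c⁻¹ * r ^ (-m) = (c * r ^ m)⁻¹ := by rw [zpow_neg, mul_inv]
  have hmono := hP.comp_neg.strictMonoOn_Ici ha (inv_pos.mpr hc) hr (m := -m) (e ▸ hm)
  intro i hi j hj hij
  simpa using hmono (show -m ≤ -j from neg_le_neg hj) (show -m ≤ -i from neg_le_neg hi)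
    (neg_lt_neg hij)

theorem strictMonoOn_or_strictAntiOn (hP : GeomSandwich a c r P) (ha : 0 < a) (hc : 0 < c)
    (hr : 1 < r) {m : ℤ}
    (hm : a * (2 * r ^ 2 / (r - 1)) < P m) : StrictMonoOn P (Ici m) ∨ StrictAntiOn P (Iic m) := by
  have ht : 0 < c * r ^ m := by positivity
  have hK : 2 * r ^ 2 / (r - 1) < c * r ^ m + (c * r ^ m)⁻¹ :=
    lt_of_mul_lt_mul_left (hm.trans_le (hP m).2) ha.le
  rcases le_total 1 (c * r ^ m) with h | h
  · exact .inl (hP.strictMonoOn_Ici ha hc hr (by linarith [inv_le_one_of_one_le₀ h]))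
  · exact .inr (hP.strictAntiOn_Iic ha hc hr (by linarith))

theorem le_of_mem_Icc (hP : GeomSandwich a c r P) (ha : 0 < a) (hr : 1 < r) {m : ℤ}
    (hm : c * r ^ m ∈ Icc r⁻¹ r) : P m ≤ a * (2 * r ^ 2 / (r - 1)) := by
  have ht : 0 < c * r ^ m := (inv_pos.mpr (zero_lt_one.trans hr)).trans_le hm.1
  have hinv : (c * r ^ m)⁻¹ ≤ r := inv_le_of_inv_le₀ (zero_lt_one.trans hr) hm.1
  have hK : 2 * r ≤ 2 * r ^ 2 / (r - 1) := by
    rw [le_div_iff₀ (sub_pos.mpr hr)]; nlinarith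
  exact (hP m).2.trans (mul_le_mul_of_nonneg_left (by linarith [hm.2]) ha.le)

theorem exists_consecutive_le (hP : GeomSandwich a c r P) (ha : 0 < a) (hc : 0 < c)
    (hr : 1 < r) : ∃ n : ℤ, P n ≤ a * (2 * r ^ 2 / (r - 1)) ∧
      P (n + 1) ≤ a * (2 * r ^ 2 / (r - 1)) := by
  obtain ⟨n, hn, hn'⟩ := exists_mem_Ico_zpow (inv_pos.mpr hc) hr
  have r0 : 0 < r := zero_lt_one.trans hr
  have h₀ : c * r ^ n ≤ 1 := by
    simpa [mul_inv_cancel₀ hc.ne'] using mul_le_mul_of_nonneg_left hn hc.le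
  have h₁ : 1 < c * r ^ (n + 1) := by
    simpa [mul_inv_cancel₀ hc.ne'] using mul_lt_mul_of_pos_left hn' hc
  have e : c * r ^ (n + 1) = r * (c * r ^ n) := by rw [zpow_add_one₀ r0.ne']; ring
  refine ⟨n, hP.le_of_mem_Icc ha hr ⟨?_, by linarith⟩, hP.le_of_mem_Icc ha hr ⟨?_, ?_⟩⟩
  · rw [inv_le_iff_one_le_mul₀' r0, ← e]; exact h₁.le
  · exact (inv_lt_one_of_one_lt₀ hr).le.trans h₁.le
  · rw [e]; nlinarith [inv_pos.mpr r0]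

theorem bddAbove (hP : GeomSandwich a c r P) (ha : 0 < a) (hc : 0 < c) (hr : 1 < r) :
    BddAbove {m | P m ≤ a * (2 * r ^ 2 / (r - 1))} := by
  obtain ⟨M, -, hM⟩ := exists_mem_Ico_zpow (x := (2 * r ^ 2 / (r - 1) + 1) / c)
    (div_pos (by have := sub_pos.mpr hr; positivity) hc) hr
  rw [div_lt_iff₀' hc] at hM
  have hK : 0 < 2 * r ^ 2 / (r - 1) := by have := sub_pos.mpr hr; positivity
  refine ⟨M + 1, fun m (hm : P m ≤ _) => le_of_not_gt fun h => hm.not_gt ?_⟩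
  have ht : 2 * r ^ 2 / (r - 1) + 1 < c * r ^ m :=
    hM.trans_le (mul_le_mul_of_nonneg_left (zpow_le_zpow_right₀ hr.le h.le) hc.le)
  have hinv : (c * r ^ m)⁻¹ < 1 := inv_lt_one_of_one_lt₀ (by linarith)
  calc a * (2 * r ^ 2 / (r - 1)) < a * (c * r ^ m - (c * r ^ m)⁻¹) :=
        mul_lt_mul_of_pos_left (by linarith) ha
    _ ≤ a * |c * r ^ m - (c * r ^ m)⁻¹| := mul_le_mul_of_nonneg_left (le_abs_self _) ha.le
    _ ≤ P m := (hP m).1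

theorem bddBelow (hP : GeomSandwich a c r P) (ha : 0 < a) (hc : 0 < c) (hr : 1 < r) :
    BddBelow {m | P m ≤ a * (2 * r ^ 2 / (r - 1))} := by
  obtain ⟨b, hb⟩ := hP.comp_neg.bddAbove ha (inv_pos.mpr hc) hr
  exact ⟨-b, fun m (hm : P m ≤ _) => neg_le.mpr (hb (show P (-(-m)) ≤ _ by rwa [neg_neg]))⟩

theorem exists_Icc (hP : GeomSandwich a c r P) (ha : 0 < a) (hc : 0 < c) (hr : 1 < r) :
    ∃ m₁ m₂ : ℤ, m₁ < m₂ ∧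
      (∀ m : ℤ, P m ≤ a * (2 * r ^ 2 / (r - 1)) ↔ m₁ ≤ m ∧ m ≤ m₂) ∧
      (∀ m m' : ℤ, m < m' → m' ≤ m₁ → P m' < P m) ∧
      (∀ m m' : ℤ, m₂ ≤ m → m < m' → P m < P m') := by
  obtain ⟨n, hn, hn'⟩ := hP.exists_consecutive_le ha hc hr
  exact exists_sublevel_Icc_of_strictMonoOn_or_strictAntiOn hn hn' (hP.bddAbove ha hc hr)
    (hP.bddBelow ha hc hr)
    fun _ => hP.strictMonoOn_or_strictAntiOn ha hc hr

end GeomSandwich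

theorem recurrence_ext {R : Type*} [CommRing R] {x : R} {y g : ℤ → R}
    (hy : ∀ m, y (m - 1) + y (m + 1) = x * y m) (hg : ∀ m, g (m - 1) + g (m + 1) = x * g m)
    (h₀ : y 0 = g 0) (h₁ : y 1 = g 1) : y = g := by
  suffices h : ∀ m, y m = g m ∧ y (m + 1) = g (m + 1) from funext fun m => (h m).1
  intro m
  induction m using Int.induction_on with
  | zero => exact ⟨h₀, by simpa using h₁⟩
  | succ k ih =>
    refine ⟨ih.2, ?_⟩
    have hyk := hy (k + 1)
    have hgk := hg (k + 1)
    rw [add_sub_cancel_right] at hyk hgk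
    linear_combination hyk - hgk + x * ih.2 - ih.1
  | pred k ih =>
    refine ⟨?_, by simpa using ih.1⟩
    linear_combination hy (-k) - hg (-k) + x * ih.1 - ih.2

theorem exists_eq_mul_zpow_add_mul_zpow_neg {K : Type*} [Field K] {x l : K} {y : ℤ → K}
    (hroot : l ^ 2 - x * l + 1 = 0) (hl : l⁻¹ ≠ l)
    (hy : ∀ m, y (m - 1) + y (m + 1) = x * y m) :
    ∃ A B : K, ∀ m, y m = A * l ^ m + B * l ^ (-m) := by
  have hl0 : l ≠ 0 := by rintro rfl; simp at hroot
  have hx : x = l + l⁻¹ := by field_simp; linear_combination -hroot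
  have hd : l - l⁻¹ ≠ 0 := sub_ne_zero.2 hl.symm
  set A := (y 1 - l⁻¹ * y 0) / (l - l⁻¹)
  set B := (l * y 0 - y 1) / (l - l⁻¹)
  refine ⟨A, B, congrFun (recurrence_ext (g := fun m => A * l ^ m + B * l ^ (-m)) hy
    (fun m => ?_) ?_ ?_)⟩
  · simp only [zpow_neg, zpow_sub_one₀ hl0, zpow_add_one₀ hl0, hx]
    field_simp
    ring
  · simp only [A, B, zpow_zero, neg_zero, mul_one]
    rw [← add_div, eq_div_iff hd]; ring
  · simp only [A, B, zpow_one, zpow_neg_one, div_mul_eq_mul_div]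
    rw [← add_div, eq_div_iff hd]; ring

theorem vertex_form_two_terms {K : Type*} [Field K] {l : K} (hl : l ≠ 0) (A B : K) :
    (A + B) ^ 2 + (A * l + B * l⁻¹) ^ 2 - (l + l⁻¹) * (A + B) * (A * l + B * l⁻¹) =
      -(A * B * (l - l⁻¹) ^ 2) := by
  field_simp; ring

theorem geomSandwich_norm {𝕜 : Type*} [NormedField 𝕜] {A B : 𝕜} (l : 𝕜) (hA : A ≠ 0)
    (hB : B ≠ 0) :
    GeomSandwich √(‖A‖ * ‖B‖) √(‖A‖ / ‖B‖) ‖l‖ (fun m => ‖A * l ^ m + B * l ^ (-m)‖) := by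
  refine GeomSandwich.of_two_terms (norm_pos_iff.2 hA) (norm_pos_iff.2 hB) fun m => ?_
  have e₁ : ‖A * l ^ m‖ = ‖A‖ * ‖l‖ ^ m := by rw [norm_mul, norm_zpow]
  have e₂ : ‖B * l ^ (-m)‖ = ‖B‖ * (‖l‖ ^ m)⁻¹ := by rw [norm_mul, norm_zpow, zpow_neg]
  rw [← e₁, ← e₂]
  exact ⟨by simpa using abs_norm_sub_norm_le (A * l ^ m) (-(B * l ^ (-m))), norm_add_le _ _⟩

theorem attracting_interval_general (μ : ℂ) (x : ℂ) (σ : ℂ) (hσ : σ ≠ μ)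
    (l : ℂ) (hroot : l ^ 2 - x * l + 1 = 0) (hl : 1 < ‖l‖)
    (Hμ : ℝ)
    (hH : Hμ = Real.sqrt (‖σ - μ‖ / ‖x ^ 2 - 4‖) *
      (2 * ‖l‖ ^ 2 / (‖l‖ - 1)))
    (y : ℤ → ℂ)
    (hrec : ∀ m : ℤ, y (m - 1) + y (m + 1) = x * y m)
    (hvert : ∀ m : ℤ, μ = σ + y m ^ 2 + y (m + 1) ^ 2 - x * y m * y (m + 1)) :
    ∃ m₁ m₂ : ℤ, m₁ < m₂ ∧
      (∀ m : ℤ, ‖y m‖ ≤ Hμ ↔ m₁ ≤ m ∧ m ≤ m₂) ∧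
      (∀ m m' : ℤ, m < m' → m' ≤ m₁ → ‖y m'‖ < ‖y m‖) ∧
      (∀ m m' : ℤ, m₂ ≤ m → m < m' → ‖y m‖ < ‖y m'‖) := by
  have hl0 : l ≠ 0 := by rintro rfl; norm_num at hl
  have hx : x = l + l⁻¹ := by field_simp; linear_combination -hroot
  have hinv : l⁻¹ ≠ l := fun h => by
    have := congrArg norm h
    rw [norm_inv] at this
    linarith [inv_lt_one_of_one_lt₀ hl]
  obtain ⟨A, B, hy⟩ := exists_eq_mul_zpow_add_mul_zpow_neg hroot hinv hrec
  have hAB : σ - μ = A * B * (l - l⁻¹) ^ 2 := by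
    have hv := hvert 0
    simp only [zero_add, hy, zpow_zero, neg_zero, zpow_one, zpow_neg_one, mul_one] at hv
    linear_combination -hv - vertex_form_two_terms hl0 A B + (A + B) * (A * l + B * l⁻¹) * hx
  have hx4 : x ^ 2 - 4 = (l - l⁻¹) ^ 2 := by rw [hx]; field_simp; ring
  have hA : A ≠ 0 := by rintro rfl; exact hσ (by simpa [sub_eq_zero] using hAB)
  have hB : B ≠ 0 := by rintro rfl; exact hσ (by simpa [sub_eq_zero] using hAB)
  have hHμ : Hμ = √(‖A‖ * ‖B‖) * (2 * ‖l‖ ^ 2 / (‖l‖ - 1)) := by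
    rw [hH, hAB, hx4, norm_mul, norm_mul,
      mul_div_cancel_right₀ _ (by simpa [sub_eq_zero] using hinv.symm)]
  obtain rfl : y = fun m => A * l ^ m + B * l ^ (-m) := funext hy
  exact hHμ ▸ (geomSandwich_norm l hA hB).exists_Icc (by positivity) (by positivity) hl

/-- Let `x = ∏ xᵢ ∉ [−2,2]`, `σ = ∑ xᵢ² ≠ μ`, let `l` be the root of `l² − x·l + 1 = 0`
with `|l| > 1`, and set `H_μ = √(|σ−μ|/|x²−4|) · 2|l|²/(|l|−1)`. If `(yₘ)` satisfies the
edge and vertex relations along an alternating geodesic, then `{m : |yₘ| ≤ H_μ}` is exactly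
an interval `[m₁, m₂]` with `m₁ < m₂`, `|yₘ|` is strictly decreasing for `m ≤ m₁`
and strictly increasing for `m ≥ m₂`. -/
theorem attracting_interval (n : ℕ) (hn : 3 ≤ n) (μ : ℂ) (xv : Fin (n - 2) → ℂ)
    (x : ℂ) (hx : x = ∏ i, xv i)
    (hxI : x ∉ (fun r : ℝ => (r : ℂ)) '' Set.Icc (-2 : ℝ) 2)
    (σ : ℂ) (hσdef : σ = ∑ i, xv i ^ 2) (hσ : σ ≠ μ)
    (l : ℂ) (hroot : l ^ 2 - x * l + 1 = 0) (hl : 1 < ‖l‖)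
    (Hμ : ℝ)
    (hH : Hμ = Real.sqrt (‖σ - μ‖ / ‖x ^ 2 - 4‖) *
      (2 * ‖l‖ ^ 2 / (‖l‖ - 1)))
    (y : ℤ → ℂ)
    (hrec : ∀ m : ℤ, y (m - 1) + y (m + 1) = x * y m)
    (hvert : ∀ m : ℤ, μ = σ + y m ^ 2 + y (m + 1) ^ 2 - x * y m * y (m + 1)) :
    ∃ m₁ m₂ : ℤ, m₁ < m₂ ∧
      (∀ m : ℤ, ‖y m‖ ≤ Hμ ↔ m₁ ≤ m ∧ m ≤ m₂) ∧
      (∀ m m' : ℤ, m < m' → m' ≤ m₁ → ‖y m'‖ < ‖y m‖) ∧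
      (∀ m m' : ℤ, m₂ ≤ m → m < m' → ‖y m‖ < ‖y m'‖) :=
  attracting_interval_general μ x σ hσ l hroot hl Hμ hH y hrec hvert
end
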